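/- arXiv:1905.02300 — 3 statements merged into one kernel-verified Lean document; each statement's English description precedes it below -/
import Mathlib

section
/- Dissipativity identity for the rθ cross term: for every smooth function v on the closed box B vanishing on the boundary ∂B, ( D_rr D̂_θθ v, v )_ω = ∫_B (r² sin θ / R1²) |∂_r ∂_θ v|² dr dθ dφ; in particular this quantity is nonnegative. -/
open MeasureTheory Real Set

noncomputable section

/-- Partial derivative in the radial direction. -/
def pr (u : ℝ → ℝ → ℝ → ℝ) (r θ φ : ℝ) : ℝ := deriv (fun s => u s θ φ) r

/-- Partial derivative in the θ direction. -/
def pt (u : ℝ → ℝ → ℝ → ℝ) (r θ φ : ℝ) : ℝ := deriv (fun s => u r s φ) θ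

/-- Partial derivative in the φ direction. -/
def pp (u : ℝ → ℝ → ℝ → ℝ) (r θ φ : ℝ) : ℝ := deriv (fun s => u r θ s) φ

/-- `D_rr u = r⁻² ∂_r (r² ∂_r u)`. -/
def Drr (u : ℝ → ℝ → ℝ → ℝ) : ℝ → ℝ → ℝ → ℝ := fun r θ φ =>
  (1 / r ^ 2) * pr (fun r' θ' φ' => r' ^ 2 * pr u r' θ' φ') r θ φ

/-- `D_θθ u = (r² sin θ)⁻¹ ∂_θ (sin θ ∂_θ u)`. -/
def Dtt (u : ℝ → ℝ → ℝ → ℝ) : ℝ → ℝ → ℝ → ℝ := fun r θ φ =>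
  (1 / (r ^ 2 * Real.sin θ)) * pt (fun r' θ' φ' => Real.sin θ' * pt u r' θ' φ') r θ φ

/-- Modified operator `D̂_θθ u = (R1² sin θ)⁻¹ ∂_θ (sin θ ∂_θ u)`. -/
def Dhtt (R1 : ℝ) (u : ℝ → ℝ → ℝ → ℝ) : ℝ → ℝ → ℝ → ℝ := fun r θ φ =>
  (1 / (R1 ^ 2 * Real.sin θ)) * pt (fun r' θ' φ' => Real.sin θ' * pt u r' θ' φ') r θ φ

/-- `D_φφ u = (r² sin² θ)⁻¹ ∂²_φ u`. -/
def Dpp (u : ℝ → ℝ → ℝ → ℝ) : ℝ → ℝ → ℝ → ℝ := fun r θ φ =>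
  (1 / (r ^ 2 * Real.sin θ ^ 2)) * pp (pp u) r θ φ

/-- Modified operator `D̂_φφ u = (R1² sin² θ1)⁻¹ ∂²_φ u`. -/
def Dhpp (R1 θone : ℝ) (u : ℝ → ℝ → ℝ → ℝ) : ℝ → ℝ → ℝ → ℝ := fun r θ φ =>
  (1 / (R1 ^ 2 * Real.sin θone ^ 2)) * pp (pp u) r θ φ

/-- Spherical Laplacian `Δ = D_rr + D_θθ + D_φφ`. -/
def lap (u : ℝ → ℝ → ℝ → ℝ) : ℝ → ℝ → ℝ → ℝ := fun r θ φ =>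
  Drr u r θ φ + Dtt u r θ φ + Dpp u r θ φ

/-- Modified Laplacian `Δ̂ = D_rr + D̂_θθ + D̂_φφ`. -/
def laph (R1 θone : ℝ) (u : ℝ → ℝ → ℝ → ℝ) : ℝ → ℝ → ℝ → ℝ := fun r θ φ =>
  Drr u r θ φ + Dhtt R1 u r θ φ + Dhpp R1 θone u r θ φ

/-- Weighted inner product `(u, v)_ω = ∫_B u v r² sin θ dr dθ dφ`. -/
def ipw (R1 R2 θ1 θ2 φ1 φ2 : ℝ) (u v : ℝ → ℝ → ℝ → ℝ) : ℝ :=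
  ∫ r in Icc R1 R2, ∫ θ in Icc θ1 θ2, ∫ φ in Icc φ1 φ2,
    u r θ φ * v r θ φ * (r ^ 2 * Real.sin θ)

/-- Squared norm with a general nonnegative weight `w(r, θ)`:
`‖v‖²_w = ∫_B w v² dr dθ dφ`. -/
def wnorm (R1 R2 θ1 θ2 φ1 φ2 : ℝ) (w : ℝ → ℝ → ℝ) (v : ℝ → ℝ → ℝ → ℝ) : ℝ :=
  ∫ r in Icc R1 R2, ∫ θ in Icc θ1 θ2, ∫ φ in Icc φ1 φ2,
    w r θ * (v r θ φ) ^ 2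

/-- Spherical gradient energy `‖∇u‖²_ω`. -/
def gradE (R1 R2 θ1 θ2 φ1 φ2 : ℝ) (u : ℝ → ℝ → ℝ → ℝ) : ℝ :=
  ∫ r in Icc R1 R2, ∫ θ in Icc θ1 θ2, ∫ φ in Icc φ1 φ2,
    ((pr u r θ φ) ^ 2 + (1 / r ^ 2) * (pt u r θ φ) ^ 2
      + (1 / (r * Real.sin θ) ^ 2) * (pp u r θ φ) ^ 2) * (r ^ 2 * Real.sin θ)

/-- The closed coordinate box `B = [R1,R2] × [θ1,θ2] × [φ1,φ2]`. -/
def SBox (R1 R2 θ1 θ2 φ1 φ2 : ℝ) : Set (ℝ × ℝ × ℝ) :=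
  Icc R1 R2 ×ˢ Icc θ1 θ2 ×ˢ Icc φ1 φ2

/-- `u` is smooth (C^∞) up to the boundary of the closed box. -/
def SmoothOnBox (R1 R2 θ1 θ2 φ1 φ2 : ℝ) (u : ℝ → ℝ → ℝ → ℝ) : Prop :=
  ContDiffOn ℝ (⊤ : ℕ∞) (fun p : ℝ × ℝ × ℝ => u p.1 p.2.1 p.2.2) (SBox R1 R2 θ1 θ2 φ1 φ2)

/-- `u` vanishes on the boundary `∂B` of the closed box. -/
def VanishOnBdry (R1 R2 θ1 θ2 φ1 φ2 : ℝ) (u : ℝ → ℝ → ℝ → ℝ) : Prop :=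
  ∀ p ∈ frontier (SBox R1 R2 θ1 θ2 φ1 φ2), u p.1 p.2.1 p.2.2 = 0

open Topology Filter

section AuxLemmas

variable {a b c d e f : ℝ}

lemma SBox_eq : SBox a b c d e f = Icc a b ×ˢ Icc c d ×ˢ Icc e f := rfl

lemma uniqueDiffOn_SBox (hab : a < b) (hcd : c < d) (hef : e < f) :
    UniqueDiffOn ℝ (SBox a b c d e f) :=
  (uniqueDiffOn_Icc hab).prod ((uniqueDiffOn_Icc hcd).prod (uniqueDiffOn_Icc hef))

lemma interior_SBox : interior (SBox a b c d e f) = Ioo a b ×ˢ Ioo c d ×ˢ Ioo e f := by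
  rw [SBox_eq, interior_prod_eq, interior_prod_eq, interior_Icc, interior_Icc, interior_Icc]

lemma closure_interior_SBox (hab : a < b) (hcd : c < d) (hef : e < f) :
    SBox a b c d e f ⊆ closure (interior (SBox a b c d e f)) := by
  rw [interior_SBox, SBox_eq, closure_prod_eq, closure_prod_eq,
    closure_Ioo hab.ne, closure_Ioo hcd.ne, closure_Ioo hef.ne]

lemma isClosed_SBox : IsClosed (SBox a b c d e f) := by
  rw [SBox_eq]; exact isClosed_Icc.prod (isClosed_Icc.prod isClosed_Icc)

lemma frontier_SBox : frontier (SBox a b c d e f)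
    = SBox a b c d e f \ (Ioo a b ×ˢ Ioo c d ×ˢ Ioo e f) := by
  rw [isClosed_SBox.frontier_eq, interior_SBox]

lemma continuousOn_slice1 {g : ℝ × ℝ × ℝ → ℝ} {θ φ : ℝ}
    (hg : ContinuousOn g (SBox a b c d e f)) (hθ : θ ∈ Icc c d) (hφ : φ ∈ Icc e f) :
    ContinuousOn (fun s => g (s, θ, φ)) (Icc a b) :=
  hg.comp ((continuous_id.prodMk continuous_const).continuousOn)
    (fun s hs => ⟨hs, hθ, hφ⟩)

lemma continuousOn_slice2 {g : ℝ × ℝ × ℝ → ℝ} {r φ : ℝ}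
    (hg : ContinuousOn g (SBox a b c d e f)) (hr : r ∈ Icc a b) (hφ : φ ∈ Icc e f) :
    ContinuousOn (fun s => g (r, s, φ)) (Icc c d) :=
  hg.comp ((continuous_const.prodMk (continuous_id.prodMk continuous_const)).continuousOn)
    (fun s hs => ⟨hr, hs, hφ⟩)

/-- partial derivative within a set in direction `i`. -/
def PD (S : Set (ℝ × ℝ × ℝ)) (i : ℝ × ℝ × ℝ) (G : ℝ × ℝ × ℝ → ℝ) : ℝ × ℝ × ℝ → ℝ :=
  fun p => fderivWithin ℝ G S p i

lemma PD_contDiffOn {S : Set (ℝ × ℝ × ℝ)} (hS : UniqueDiffOn ℝ S) {G : ℝ × ℝ × ℝ → ℝ}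
    (hG : ContDiffOn ℝ (⊤ : ℕ∞) G S) (i : ℝ × ℝ × ℝ) :
    ContDiffOn ℝ (⊤ : ℕ∞) (PD S i G) S := by
  have h1 : ContDiffOn ℝ (⊤ : ℕ∞) (fun p => fderivWithin ℝ G S p) S :=
    hG.fderivWithin hS (by exact_mod_cast le_top)
  exact h1.clm_apply contDiffOn_const

lemma hasDerivAt_slice1 {G : ℝ × ℝ × ℝ → ℝ}
    (hG : ContDiffOn ℝ (⊤ : ℕ∞) G (SBox a b c d e f)) {r θ φ : ℝ}
    (hr : r ∈ Ioo a b) (hp : ((r, θ, φ) : ℝ × ℝ × ℝ) ∈ SBox a b c d e f) :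
    HasDerivAt (fun s => G (s, θ, φ)) (PD (SBox a b c d e f) (1, 0, 0) G (r, θ, φ)) r := by
  have hd : DifferentiableWithinAt ℝ G (SBox a b c d e f) (r, θ, φ) :=
    (hG.differentiableOn (by simp)) _ hp
  have hL : HasDerivWithinAt (fun s : ℝ => ((s, θ, φ) : ℝ × ℝ × ℝ)) (1, 0, 0) (Icc a b) r :=
    ((hasDerivAt_id r).prodMk (hasDerivAt_const r (θ, φ))).hasDerivWithinAt
  have maps : MapsTo (fun s : ℝ => ((s, θ, φ) : ℝ × ℝ × ℝ)) (Icc a b) (SBox a b c d e f) :=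
    fun s hs => ⟨hs, hp.2⟩
  have h2 := hd.hasFDerivWithinAt.comp_hasDerivWithinAt r hL maps
  exact h2.hasDerivAt (Icc_mem_nhds hr.1 hr.2)

lemma hasDerivAt_slice2 {G : ℝ × ℝ × ℝ → ℝ}
    (hG : ContDiffOn ℝ (⊤ : ℕ∞) G (SBox a b c d e f)) {r θ φ : ℝ}
    (hθ : θ ∈ Ioo c d) (hp : ((r, θ, φ) : ℝ × ℝ × ℝ) ∈ SBox a b c d e f) :
    HasDerivAt (fun s => G (r, s, φ)) (PD (SBox a b c d e f) (0, 1, 0) G (r, θ, φ)) θ := by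
  have hd : DifferentiableWithinAt ℝ G (SBox a b c d e f) (r, θ, φ) :=
    (hG.differentiableOn (by simp)) _ hp
  have hL : HasDerivWithinAt (fun s : ℝ => ((r, s, φ) : ℝ × ℝ × ℝ)) (0, 1, 0) (Icc c d) θ :=
    ((hasDerivAt_const θ r).prodMk ((hasDerivAt_id θ).prodMk (hasDerivAt_const θ φ))).hasDerivWithinAt
  have maps : MapsTo (fun s : ℝ => ((r, s, φ) : ℝ × ℝ × ℝ)) (Icc c d) (SBox a b c d e f) :=
    fun s hs => ⟨hp.1, hs, hp.2.2⟩
  have h2 := hd.hasFDerivWithinAt.comp_hasDerivWithinAt θ hL maps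
  exact h2.hasDerivAt (Icc_mem_nhds hθ.1 hθ.2)

lemma PD_PD {S : Set (ℝ × ℝ × ℝ)} (hS : UniqueDiffOn ℝ S) {G : ℝ × ℝ × ℝ → ℝ}
    (hG : ContDiffOn ℝ (⊤ : ℕ∞) G S) {p : ℝ × ℝ × ℝ} (hp : p ∈ S) (i j : ℝ × ℝ × ℝ) :
    PD S i (PD S j G) p = fderivWithin ℝ (fderivWithin ℝ G S) S p i j := by
  have hc : DifferentiableWithinAt ℝ (fun q => fderivWithin ℝ G S q) S p := by
    have h1 : ContDiffOn ℝ (⊤ : ℕ∞) (fun q => fderivWithin ℝ G S q) S :=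
      hG.fderivWithin hS (by exact_mod_cast le_top)
    exact (h1.differentiableOn (by simp)) p hp
  have hu : DifferentiableWithinAt ℝ (fun _ : ℝ × ℝ × ℝ => j) S p :=
    differentiableWithinAt_const j
  have h2 := fderivWithin_clm_apply (hS p hp) hc hu
  have h3 : PD S i (PD S j G) p
      = (fderivWithin ℝ (fun q : ℝ × ℝ × ℝ => (fderivWithin ℝ G S q) j) S p) i := rfl
  rw [h3, h2]
  simp only [ContinuousLinearMap.add_apply, ContinuousLinearMap.coe_comp', Function.comp_apply,
    ContinuousLinearMap.flip_apply, fderivWithin_const_apply j,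
    ContinuousLinearMap.zero_apply, map_zero, zero_add]

lemma PD_comm {S : Set (ℝ × ℝ × ℝ)} (hS : UniqueDiffOn ℝ S) {G : ℝ × ℝ × ℝ → ℝ}
    (hG : ContDiffOn ℝ (⊤ : ℕ∞) G S) {p : ℝ × ℝ × ℝ}
    (hcl : p ∈ closure (interior S)) (hp : p ∈ S) (i j : ℝ × ℝ × ℝ) :
    PD S i (PD S j G) p = PD S j (PD S i G) p := by
  have hsym : IsSymmSndFDerivWithinAt ℝ G S p := by
    refine (hG p hp).isSymmSndFDerivWithinAt ?_ hS hcl hp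
    rw [show ((2 : WithTop ℕ∞)) = (((2 : ℕ∞)) : WithTop ℕ∞) from rfl]
    rw [minSmoothness_of_isRCLikeNormedField]
    exact WithTop.coe_le_coe.2 le_top
  rw [PD_PD hS hG hp i j, PD_PD hS hG hp j i]
  exact hsym i j

lemma flat2 {t u : Set ℝ} (g : ℝ × ℝ → ℝ) (hg : IntegrableOn g (t ×ˢ u)) :
    ∫ q in t ×ˢ u, g q = ∫ y in t, ∫ z in u, g (y, z) := by
  rw [Measure.volume_eq_prod ℝ ℝ] at hg
  rw [show (volume : Measure (ℝ × ℝ)) = (volume : Measure ℝ).prod volume from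
    Measure.volume_eq_prod ℝ ℝ]
  exact setIntegral_prod g hg

lemma flat3 {s t u : Set ℝ} (g : ℝ × ℝ × ℝ → ℝ)
    (hg : IntegrableOn g (s ×ˢ t ×ˢ u)) :
    ∫ p in s ×ˢ t ×ˢ u, g p = ∫ x in s, ∫ y in t, ∫ z in u, g (x, y, z) := by
  rw [Measure.volume_eq_prod ℝ (ℝ × ℝ)] at hg
  rw [show (volume : Measure (ℝ × ℝ × ℝ)) = (volume : Measure ℝ).prod volume from
    Measure.volume_eq_prod ℝ (ℝ × ℝ)]
  rw [setIntegral_prod g hg]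
  have h1 : ∀ᵐ x ∂(volume.restrict s), IntegrableOn (fun q => g (x, q)) (t ×ˢ u) := by
    have h := hg
    rw [IntegrableOn, ← Measure.prod_restrict] at h
    exact h.prod_right_ae
  refine integral_congr_ae ?_
  filter_upwards [h1] with x hx
  exact flat2 _ hx

/-- the cyclic permutation `(θ, φ, r) ↦ (r, θ, φ)` as a measurable equiv. -/
def cyc : (ℝ × ℝ × ℝ) ≃ᵐ (ℝ × ℝ × ℝ) :=
  (MeasurableEquiv.prodAssoc.symm).trans
    (MeasurableEquiv.prodComm : ((ℝ × ℝ) × ℝ) ≃ᵐ (ℝ × (ℝ × ℝ)))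

lemma cyc_apply (q : ℝ × ℝ × ℝ) : cyc q = (q.2.2, q.1, q.2.1) := rfl

lemma cyc_measurePreserving : MeasurePreserving cyc
    (volume : Measure (ℝ × ℝ × ℝ)) (volume : Measure (ℝ × ℝ × ℝ)) := by
  have h1 : MeasurePreserving (MeasurableEquiv.prodAssoc.symm :
      (ℝ × ℝ × ℝ) ≃ᵐ ((ℝ × ℝ) × ℝ)) volume volume :=
    (volume_preserving_prodAssoc (α₁ := ℝ) (β₁ := ℝ) (γ₁ := ℝ)).symm _
  have h2 : MeasurePreserving
      (MeasurableEquiv.prodComm : ((ℝ × ℝ) × ℝ) ≃ᵐ (ℝ × (ℝ × ℝ))) volume volume := by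
    exact Measure.measurePreserving_swap (μ := (volume : Measure (ℝ × ℝ)))
      (ν := (volume : Measure ℝ))
  exact h2.comp h1

/-- the swap of the last two coordinates as a measurable equiv. -/
def sw23 : (ℝ × ℝ × ℝ) ≃ᵐ (ℝ × ℝ × ℝ) :=
  (MeasurableEquiv.refl ℝ).prodCongr (MeasurableEquiv.prodComm : (ℝ × ℝ) ≃ᵐ (ℝ × ℝ))

lemma sw23_apply (q : ℝ × ℝ × ℝ) : sw23 q = (q.1, q.2.2, q.2.1) := rfl

lemma sw23_measurePreserving : MeasurePreserving sw23
    (volume : Measure (ℝ × ℝ × ℝ)) (volume : Measure (ℝ × ℝ × ℝ)) := by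
  have h2 : MeasurePreserving (Prod.swap : ℝ × ℝ → ℝ × ℝ) volume volume :=
    Measure.measurePreserving_swap
  have h3 := (MeasurePreserving.id (volume : Measure ℝ)).prod h2
  have hc : ⇑sw23 = Prod.map id Prod.swap := rfl
  rw [hc]
  exact h3

lemma integrableOn_box {g : ℝ × ℝ × ℝ → ℝ} (hg : ContinuousOn g (SBox a b c d e f)) :
    IntegrableOn g (Icc a b ×ˢ Icc c d ×ˢ Icc e f) :=
  hg.integrableOn_compact (isCompact_Icc.prod (isCompact_Icc.prod isCompact_Icc))

lemma fubini_cycle {g : ℝ × ℝ × ℝ → ℝ} (hg : ContinuousOn g (SBox a b c d e f)) :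
    ∫ θ in Icc c d, ∫ φ in Icc e f, ∫ r in Icc a b, g (r, θ, φ)
      = ∫ r in Icc a b, ∫ θ in Icc c d, ∫ φ in Icc e f, g (r, θ, φ) := by
  have hpre : (cyc ⁻¹' (Icc a b ×ˢ Icc c d ×ˢ Icc e f)) = Icc c d ×ˢ Icc e f ×ˢ Icc a b := by
    ext q
    simp only [mem_preimage, cyc_apply, mem_prod]
    tauto
  have hcont' : ContinuousOn (fun q : ℝ × ℝ × ℝ => g (cyc q))
      (Icc c d ×ˢ Icc e f ×ˢ Icc a b) := by
    apply hg.comp (Continuous.continuousOn (by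
      rw [show ⇑cyc = (fun q : ℝ × ℝ × ℝ => (q.2.2, q.1, q.2.1)) from rfl]; fun_prop))
    intro q hq
    rw [← hpre] at hq
    exact hq
  have hint' : IntegrableOn (fun q : ℝ × ℝ × ℝ => g (cyc q))
      (Icc c d ×ˢ Icc e f ×ˢ Icc a b) :=
    hcont'.integrableOn_compact (isCompact_Icc.prod (isCompact_Icc.prod isCompact_Icc))
  have h1 : ∫ θ in Icc c d, ∫ φ in Icc e f, ∫ r in Icc a b, g (r, θ, φ)
      = ∫ q in Icc c d ×ˢ Icc e f ×ˢ Icc a b, g (cyc q) := by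
    rw [flat3 _ hint']
    try simp only [cyc_apply]
  rw [h1, ← hpre, cyc_measurePreserving.setIntegral_preimage_emb cyc.measurableEmbedding,
    flat3 _ (integrableOn_box hg)]

lemma fubini_swap23 {g : ℝ × ℝ × ℝ → ℝ} (hg : ContinuousOn g (SBox a b c d e f)) :
    ∫ r in Icc a b, ∫ φ in Icc e f, ∫ θ in Icc c d, g (r, θ, φ)
      = ∫ r in Icc a b, ∫ θ in Icc c d, ∫ φ in Icc e f, g (r, θ, φ) := by
  have hpre : (sw23 ⁻¹' (Icc a b ×ˢ Icc c d ×ˢ Icc e f)) = Icc a b ×ˢ Icc e f ×ˢ Icc c d := by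
    ext q
    simp only [mem_preimage, sw23_apply, mem_prod]
    tauto
  have hcont' : ContinuousOn (fun q : ℝ × ℝ × ℝ => g (sw23 q))
      (Icc a b ×ˢ Icc e f ×ˢ Icc c d) := by
    apply hg.comp (Continuous.continuousOn (by
      rw [show ⇑sw23 = (fun q : ℝ × ℝ × ℝ => (q.1, q.2.2, q.2.1)) from rfl]; fun_prop))
    intro q hq
    rw [← hpre] at hq
    exact hq
  have hint' : IntegrableOn (fun q : ℝ × ℝ × ℝ => g (sw23 q))
      (Icc a b ×ˢ Icc e f ×ˢ Icc c d) :=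
    hcont'.integrableOn_compact (isCompact_Icc.prod (isCompact_Icc.prod isCompact_Icc))
  have h1 : ∫ r in Icc a b, ∫ φ in Icc e f, ∫ θ in Icc c d, g (r, θ, φ)
      = ∫ q in Icc a b ×ˢ Icc e f ×ˢ Icc c d, g (sw23 q) := by
    rw [flat3 _ hint']
    try simp only [sw23_apply]
  rw [h1, ← hpre, sw23_measurePreserving.setIntegral_preimage_emb sw23.measurableEmbedding,
    flat3 _ (integrableOn_box hg)]

lemma iter_congr3 {g h : ℝ → ℝ → ℝ → ℝ}
    (H : ∀ r ∈ Ioo a b, ∀ θ ∈ Ioo c d, ∀ φ ∈ Ioo e f, g r θ φ = h r θ φ) :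
    ∫ r in Icc a b, ∫ θ in Icc c d, ∫ φ in Icc e f, g r θ φ
      = ∫ r in Icc a b, ∫ θ in Icc c d, ∫ φ in Icc e f, h r θ φ := by
  simp only [integral_Icc_eq_integral_Ioo]
  refine setIntegral_congr_fun measurableSet_Ioo (fun r hr => ?_)
  refine setIntegral_congr_fun measurableSet_Ioo (fun θ hθ => ?_)
  exact setIntegral_congr_fun measurableSet_Ioo (fun φ hφ => H r hr θ hθ φ hφ)

lemma integral_eq_neg_of_antideriv {a b : ℝ} (hab : a < b) {A g h : ℝ → ℝ}
    (hA : ContinuousOn A (Icc a b)) (hg : ContinuousOn g (Icc a b))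
    (hh : ContinuousOn h (Icc a b))
    (hd : ∀ s ∈ Ioo a b, HasDerivAt A (g s + h s) s) (hA0 : A a = 0) (hA1 : A b = 0) :
    ∫ s in Icc a b, g s = - ∫ s in Icc a b, h s := by
  have hgh : ContinuousOn (fun s => g s + h s) (Icc a b) := hg.add hh
  have hint : IntervalIntegrable (fun s => g s + h s) volume a b :=
    ContinuousOn.intervalIntegrable (by rwa [uIcc_of_le hab.le])
  have hFTC := intervalIntegral.integral_eq_sub_of_hasDeriv_right_of_le hab.le hA
    (fun x hx => (hd x hx).hasDerivWithinAt) hint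
  rw [hA0, hA1, sub_zero] at hFTC
  rw [intervalIntegral.integral_of_le hab.le] at hFTC
  have hgi : IntegrableOn g (Ioc a b) :=
    (hg.integrableOn_compact isCompact_Icc).mono_set Ioc_subset_Icc_self
  have hhi : IntegrableOn h (Ioc a b) :=
    (hh.integrableOn_compact isCompact_Icc).mono_set Ioc_subset_Icc_self
  rw [integral_add hgi hhi] at hFTC
  rw [integral_Icc_eq_integral_Ioc, integral_Icc_eq_integral_Ioc]
  linarith

end AuxLemmas


theorem rtheta_cross_term_dissipative
    (R1 R2 θ1 θ2 φ1 φ2 : ℝ)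
    (hR1 : 0 < R1) (hRR : R1 < R2)
    (hθ1 : 0 < θ1) (hθθ : θ1 < θ2) (hθ2 : θ2 < Real.pi)
    (hφ : φ1 < φ2)
    (v : ℝ → ℝ → ℝ → ℝ)
    (hv : SmoothOnBox R1 R2 θ1 θ2 φ1 φ2 v)
    (hv0 : VanishOnBdry R1 R2 θ1 θ2 φ1 φ2 v) :
    ipw R1 R2 θ1 θ2 φ1 φ2 (Drr (Dhtt R1 v)) v
    = wnorm R1 R2 θ1 θ2 φ1 φ2 (fun r θ => r ^ 2 * Real.sin θ / R1 ^ 2) (pr (pt v)) := by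
  set S : Set (ℝ × ℝ × ℝ) := SBox R1 R2 θ1 θ2 φ1 φ2 with hSdef
  have hS : UniqueDiffOn ℝ S := uniqueDiffOn_SBox hRR hθθ hφ
  have hclS : ∀ p ∈ S, p ∈ closure (interior S) := fun p hp =>
    closure_interior_SBox hRR hθθ hφ hp
  have hsinpos : ∀ {θ : ℝ}, θ ∈ Icc θ1 θ2 → 0 < Real.sin θ := fun {θ} hθ =>
    Real.sin_pos_of_pos_of_lt_pi (lt_of_lt_of_le hθ1 hθ.1) (lt_of_le_of_lt hθ.2 hθ2)
  have hrpos : ∀ {r : ℝ}, r ∈ Icc R1 R2 → 0 < r := fun {r} hr => lt_of_lt_of_le hR1 hr.1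
  set F : ℝ × ℝ × ℝ → ℝ := fun p => v p.1 p.2.1 p.2.2 with hFdef
  have hFs : ContDiffOn ℝ (⊤ : ℕ∞) F S := by
    have hvc : ContDiffOn ℝ ((⊤ : ℕ∞) : WithTop ℕ∞) F S := hv
    exact hvc.of_le le_rfl
  have hmemS : ∀ {r θ φ : ℝ}, r ∈ Icc R1 R2 → θ ∈ Icc θ1 θ2 → φ ∈ Icc φ1 φ2 →
      ((r, θ, φ) : ℝ × ℝ × ℝ) ∈ S := fun hr hθ hφ => ⟨hr, hθ, hφ⟩
  have hF0 : ∀ {p : ℝ × ℝ × ℝ}, p ∈ S →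
      p ∉ (Ioo R1 R2 ×ˢ Ioo θ1 θ2 ×ˢ Ioo φ1 φ2) → F p = 0 := by
    intro p hp hni
    exact hv0 p (by rw [frontier_SBox]; exact ⟨hp, hni⟩)
  set e1 : ℝ × ℝ × ℝ := (1, 0, 0) with he1
  set e2 : ℝ × ℝ × ℝ := (0, 1, 0) with he2
  set D2 := PD S e2 F with hD2def
  have hD2s : ContDiffOn ℝ (⊤ : ℕ∞) D2 S := PD_contDiffOn hS hFs e2
  set D22 := PD S e2 D2 with hD22def
  have hD22s : ContDiffOn ℝ (⊤ : ℕ∞) D22 S := PD_contDiffOn hS hD2s e2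
  set G1 := PD S e1 F with hG1def
  have hG1s : ContDiffOn ℝ (⊤ : ℕ∞) G1 S := PD_contDiffOn hS hFs e1
  set G12 := PD S e2 G1 with hG12def
  have hG12s : ContDiffOn ℝ (⊤ : ℕ∞) G12 S := PD_contDiffOn hS hG1s e2
  set G122 := PD S e2 G12 with hG122def
  have hG122s : ContDiffOn ℝ (⊤ : ℕ∞) G122 S := PD_contDiffOn hS hG12s e2
  set D12 := PD S e1 D2 with hD12def
  have hD12s : ContDiffOn ℝ (⊤ : ℕ∞) D12 S := PD_contDiffOn hS hD2s e1
  set D122 := PD S e1 D22 with hD122def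
  have hsinCD : ContDiffOn ℝ (⊤ : ℕ∞) (fun p : ℝ × ℝ × ℝ => Real.sin p.2.1) S :=
    ((Real.contDiff_sin.of_le le_top).comp (contDiff_fst.comp contDiff_snd)).contDiffOn
  have hcosCD : ContDiffOn ℝ (⊤ : ℕ∞) (fun p : ℝ × ℝ × ℝ => Real.cos p.2.1) S :=
    ((Real.contDiff_cos.of_le le_top).comp (contDiff_fst.comp contDiff_snd)).contDiffOn
  set W : ℝ × ℝ × ℝ → ℝ := fun p => (1 / (R1 ^ 2 * Real.sin p.2.1)) *
    (Real.cos p.2.1 * D2 p + Real.sin p.2.1 * D22 p) with hWdef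
  have hWs : ContDiffOn ℝ (⊤ : ℕ∞) W S := by
    apply ContDiffOn.mul
    · refine ContDiffOn.div contDiffOn_const (contDiffOn_const.mul hsinCD) ?_
      intro p hp
      exact (mul_pos (pow_pos hR1 2) (hsinpos hp.2.1)).ne'
    · exact (hcosCD.mul hD2s).add (hsinCD.mul hD22s)
  set W1 := PD S e1 W with hW1def
  have hW1s : ContDiffOn ℝ (⊤ : ℕ∞) W1 S := PD_contDiffOn hS hWs e1
  set W11 := PD S e1 W1 with hW11def
  have hW11s : ContDiffOn ℝ (⊤ : ℕ∞) W11 S := PD_contDiffOn hS hW1s e1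
  have hFc : ContinuousOn F S := hFs.continuousOn
  have hW1c : ContinuousOn W1 S := hW1s.continuousOn
  have hW11c : ContinuousOn W11 S := hW11s.continuousOn
  have hG1c : ContinuousOn G1 S := hG1s.continuousOn
  have hG12c : ContinuousOn G12 S := hG12s.continuousOn
  have hsinc : ContinuousOn (fun p : ℝ × ℝ × ℝ => Real.sin p.2.1) S := hsinCD.continuousOn
  set It : ℝ × ℝ × ℝ → ℝ :=
    fun p => (2 * p.1 * W1 p + p.1 ^ 2 * W11 p) * F p * Real.sin p.2.1 with hItdef
  set K : ℝ × ℝ × ℝ → ℝ :=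
    fun p => p.1 ^ 2 * Real.sin p.2.1 * W1 p * G1 p with hKdef
  set J : ℝ × ℝ × ℝ → ℝ :=
    fun p => p.1 ^ 2 * Real.sin p.2.1 / R1 ^ 2 * G12 p ^ 2 with hJdef
  have hItc : ContinuousOn It S :=
    (((continuousOn_const.mul continuous_fst.continuousOn).mul hW1c).add
      (((continuous_fst.pow 2).continuousOn).mul hW11c)).mul hFc |>.mul hsinc
  have hKc : ContinuousOn K S :=
    ((((continuous_fst.pow 2).continuousOn).mul hsinc).mul hW1c).mul hG1c
  have hJc : ContinuousOn J S :=
    ((((continuous_fst.pow 2).continuousOn).mul hsinc).div_const (R1 ^ 2)).mul (hG12c.pow 2)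
  -- pointwise bridging facts
  have hptv : ∀ {r θ φ : ℝ}, r ∈ Icc R1 R2 → θ ∈ Ioo θ1 θ2 → φ ∈ Icc φ1 φ2 →
      pt v r θ φ = D2 (r, θ, φ) := by
    intro r θ φ hr hθ hφ
    exact (hasDerivAt_slice2 hFs hθ (hmemS hr (Ioo_subset_Icc_self hθ) hφ)).deriv
  have hDhtt : ∀ {r θ φ : ℝ}, r ∈ Icc R1 R2 → θ ∈ Ioo θ1 θ2 → φ ∈ Icc φ1 φ2 →
      Dhtt R1 v r θ φ = W (r, θ, φ) := by
    intro r θ φ hr hθ hφ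
    have hp := hmemS hr (Ioo_subset_Icc_self hθ) hφ
    have hev : (fun s => Real.sin s * pt v r s φ) =ᶠ[𝓝 θ]
        (fun s => Real.sin s * D2 (r, s, φ)) := by
      filter_upwards [Ioo_mem_nhds hθ.1 hθ.2] with s hs
      rw [hptv hr hs hφ]
    have hd := (Real.hasDerivAt_sin θ).mul (hasDerivAt_slice2 hD2s hθ hp)
    have h1 : pt (fun r' θ' φ' => Real.sin θ' * pt v r' θ' φ') r θ φ
        = Real.cos θ * D2 (r, θ, φ) + Real.sin θ * D22 (r, θ, φ) := by
      show deriv (fun s => Real.sin s * pt v r s φ) θ = _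
      rw [hev.deriv_eq]
      exact hd.deriv
    show (1 / (R1 ^ 2 * Real.sin θ)) *
        pt (fun r' θ' φ' => Real.sin θ' * pt v r' θ' φ') r θ φ = W (r, θ, φ)
    rw [h1, hWdef]
  have hprDhtt : ∀ {r θ φ : ℝ}, r ∈ Ioo R1 R2 → θ ∈ Ioo θ1 θ2 → φ ∈ Icc φ1 φ2 →
      pr (Dhtt R1 v) r θ φ = W1 (r, θ, φ) := by
    intro r θ φ hr hθ hφ
    have hp := hmemS (Ioo_subset_Icc_self hr) (Ioo_subset_Icc_self hθ) hφ
    have hev : (fun s => Dhtt R1 v s θ φ) =ᶠ[𝓝 r] (fun s => W (s, θ, φ)) := by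
      filter_upwards [Ioo_mem_nhds hr.1 hr.2] with s hs
      exact hDhtt (Ioo_subset_Icc_self hs) hθ hφ
    show deriv (fun s => Dhtt R1 v s θ φ) r = W1 (r, θ, φ)
    rw [hev.deriv_eq]
    exact (hasDerivAt_slice1 hWs hr hp).deriv
  have hDrr : ∀ {r θ φ : ℝ}, r ∈ Ioo R1 R2 → θ ∈ Ioo θ1 θ2 → φ ∈ Icc φ1 φ2 →
      Drr (Dhtt R1 v) r θ φ
        = (1 / r ^ 2) * (2 * r * W1 (r, θ, φ) + r ^ 2 * W11 (r, θ, φ)) := by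
    intro r θ φ hr hθ hφ
    have hp := hmemS (Ioo_subset_Icc_self hr) (Ioo_subset_Icc_self hθ) hφ
    have hev : (fun s => s ^ 2 * pr (Dhtt R1 v) s θ φ) =ᶠ[𝓝 r]
        (fun s => s ^ 2 * W1 (s, θ, φ)) := by
      filter_upwards [Ioo_mem_nhds hr.1 hr.2] with s hs
      rw [hprDhtt hs hθ hφ]
    have hd := (hasDerivAt_pow 2 r).mul (hasDerivAt_slice1 hW1s hr hp)
    have h1 : pr (fun r' θ' φ' => r' ^ 2 * pr (Dhtt R1 v) r' θ' φ') r θ φ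
        = 2 * r * W1 (r, θ, φ) + r ^ 2 * W11 (r, θ, φ) := by
      show deriv (fun s => s ^ 2 * pr (Dhtt R1 v) s θ φ) r = _
      rw [hev.deriv_eq, show (fun s => s ^ 2 * W1 (s, θ, φ)) = ((fun x => x ^ 2) * fun s => W1 (s, θ, φ)) from rfl, hd.deriv, ← hW11def]
      norm_num
    show (1 / r ^ 2) * pr (fun r' θ' φ' => r' ^ 2 * pr (Dhtt R1 v) r' θ' φ') r θ φ = _
    rw [h1]
  have hprpt : ∀ {r θ φ : ℝ}, r ∈ Ioo R1 R2 → θ ∈ Ioo θ1 θ2 → φ ∈ Icc φ1 φ2 →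
      pr (pt v) r θ φ = D12 (r, θ, φ) := by
    intro r θ φ hr hθ hφ
    have hp := hmemS (Ioo_subset_Icc_self hr) (Ioo_subset_Icc_self hθ) hφ
    have hev : (fun s => pt v s θ φ) =ᶠ[𝓝 r] (fun s => D2 (s, θ, φ)) := by
      filter_upwards [Ioo_mem_nhds hr.1 hr.2] with s hs
      exact hptv (Ioo_subset_Icc_self hs) hθ hφ
    show deriv (fun s => pt v s θ φ) r = D12 (r, θ, φ)
    rw [hev.deriv_eq]
    exact (hasDerivAt_slice1 hD2s hr hp).deriv
  have hW1eq : ∀ {r θ φ : ℝ}, r ∈ Ioo R1 R2 → θ ∈ Icc θ1 θ2 → φ ∈ Icc φ1 φ2 →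
      W1 (r, θ, φ) = (1 / (R1 ^ 2 * Real.sin θ)) *
        (Real.cos θ * D12 (r, θ, φ) + Real.sin θ * D122 (r, θ, φ)) := by
    intro r θ φ hr hθ hφ
    have hp := hmemS (Ioo_subset_Icc_self hr) hθ hφ
    have h1 := hasDerivAt_slice1 hWs hr hp
    have hd2 := (hasDerivAt_slice1 hD2s hr hp).const_mul (Real.cos θ)
    have hd22 := (hasDerivAt_slice1 hD22s hr hp).const_mul (Real.sin θ)
    have h2 := (hd2.add hd22).const_mul (1 / (R1 ^ 2 * Real.sin θ))
    exact h1.unique h2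
  have hswap1 : ∀ p ∈ S, D12 p = G12 p := fun p hp =>
    PD_comm hS hFs (hclS p hp) hp e1 e2
  have hswap2 : ∀ p ∈ S, D122 p = G122 p := by
    intro p hp
    have h1 : D122 p = PD S e2 D12 p := PD_comm hS hD2s (hclS p hp) hp e1 e2
    rw [h1]
    have h2 : fderivWithin ℝ D12 S p = fderivWithin ℝ G12 S p :=
      fderivWithin_congr (fun q hq => hswap1 q hq) (hswap1 p hp)
    show fderivWithin ℝ D12 S p e2 = fderivWithin ℝ G12 S p e2
    rw [h2]
  have hKeq : ∀ {r θ φ : ℝ}, r ∈ Ioo R1 R2 → θ ∈ Icc θ1 θ2 → φ ∈ Icc φ1 φ2 →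
      K (r, θ, φ) = r ^ 2 / R1 ^ 2 *
        (Real.cos θ * G12 (r, θ, φ) + Real.sin θ * G122 (r, θ, φ)) * G1 (r, θ, φ) := by
    intro r θ φ hr hθ hφ
    have hp := hmemS (Ioo_subset_Icc_self hr) hθ hφ
    have hs := (hsinpos hθ).ne'
    have hR1ne : R1 ≠ 0 := hR1.ne'
    rw [hKdef]
    simp only
    rw [hW1eq hr hθ hφ, hswap1 _ hp, hswap2 _ hp]
    field_simp
  have hG10 : ∀ {r θ φ : ℝ}, r ∈ Ioo R1 R2 → θ ∈ Icc θ1 θ2 → θ ∉ Ioo θ1 θ2 →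
      φ ∈ Icc φ1 φ2 → G1 (r, θ, φ) = 0 := by
    intro r θ φ hr hθ hnθ hφ
    have hp := hmemS (Ioo_subset_Icc_self hr) hθ hφ
    have h1 : G1 (r, θ, φ) = deriv (fun s => F (s, θ, φ)) r :=
      (hasDerivAt_slice1 hFs hr hp).deriv.symm
    have hev : (fun s => F (s, θ, φ)) =ᶠ[𝓝 r] (fun _ => (0 : ℝ)) := by
      filter_upwards [Ioo_mem_nhds hr.1 hr.2] with s hs
      exact hF0 (hmemS (Ioo_subset_Icc_self hs) hθ hφ) (fun hmem => hnθ hmem.2.1)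
    rw [h1, hev.deriv_eq]
    simp
  -- Step 1 : rewrite the left-hand side
  have step1 : ipw R1 R2 θ1 θ2 φ1 φ2 (Drr (Dhtt R1 v)) v
      = ∫ r in Icc R1 R2, ∫ θ in Icc θ1 θ2, ∫ φ in Icc φ1 φ2, It (r, θ, φ) := by
    unfold ipw
    apply iter_congr3
    intro r hr θ hθ φ hφ
    rw [hDrr hr hθ (Ioo_subset_Icc_self hφ)]
    have hrne : r ≠ 0 := (hrpos (Ioo_subset_Icc_self hr)).ne'
    have hvF : v r θ φ = F (r, θ, φ) := rfl
    rw [hvF, hItdef]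
    simp only
    field_simp
  -- integration by parts in r
  have hIBPr : ∀ θ ∈ Icc θ1 θ2, ∀ φ ∈ Icc φ1 φ2,
      ∫ s in Icc R1 R2, It (s, θ, φ) = - ∫ s in Icc R1 R2, K (s, θ, φ) := by
    intro θ hθ φ hφ
    refine integral_eq_neg_of_antideriv hRR
      (A := fun s => s ^ 2 * W1 (s, θ, φ) * F (s, θ, φ) * Real.sin θ)
      ?_ ?_ ?_ ?_ ?_ ?_
    · exact (((continuous_pow 2).continuousOn.mul (continuousOn_slice1 hW1c hθ hφ)).mul
        (continuousOn_slice1 hFc hθ hφ)).mul continuousOn_const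
    · exact continuousOn_slice1 hItc hθ hφ
    · exact continuousOn_slice1 hKc hθ hφ
    · intro s hs
      have hp := hmemS (Ioo_subset_Icc_self hs) hθ hφ
      have hd := (((hasDerivAt_pow 2 s).mul (hasDerivAt_slice1 hW1s hs hp)).mul
        (hasDerivAt_slice1 hFs hs hp)).mul_const (Real.sin θ)
      refine hd.congr_deriv ?_
      rw [hItdef, hKdef]
      simp only [Pi.mul_apply]
      push_cast
      ring
    · have h0 : F (R1, θ, φ) = 0 := hF0 (hmemS (left_mem_Icc.2 hRR.le) hθ hφ)
        (fun h => lt_irrefl R1 h.1.1)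
      simp [h0]
    · have h0 : F (R2, θ, φ) = 0 := hF0 (hmemS (right_mem_Icc.2 hRR.le) hθ hφ)
        (fun h => lt_irrefl R2 h.1.2)
      simp [h0]
  -- integration by parts in θ
  have hIBPθ : ∀ r ∈ Ioo R1 R2, ∀ φ ∈ Icc φ1 φ2,
      ∫ t in Icc θ1 θ2, K (r, t, φ) = - ∫ t in Icc θ1 θ2, J (r, t, φ) := by
    intro r hr φ hφ
    have hrI := Ioo_subset_Icc_self hr
    refine integral_eq_neg_of_antideriv hθθ
      (A := fun t => r ^ 2 / R1 ^ 2 * (Real.sin t * G12 (r, t, φ) * G1 (r, t, φ)))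
      ?_ ?_ ?_ ?_ ?_ ?_
    · exact continuousOn_const.mul ((Real.continuous_sin.continuousOn.mul
        (continuousOn_slice2 hG12c hrI hφ)).mul (continuousOn_slice2 hG1c hrI hφ))
    · exact continuousOn_slice2 hKc hrI hφ
    · exact continuousOn_slice2 hJc hrI hφ
    · intro t ht
      have hp := hmemS hrI (Ioo_subset_Icc_self ht) hφ
      have hd := (((Real.hasDerivAt_sin t).mul (hasDerivAt_slice2 hG12s ht hp)).mul
        (hasDerivAt_slice2 hG1s ht hp)).const_mul (r ^ 2 / R1 ^ 2)
      refine hd.congr_deriv ?_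
      rw [hKeq hr (Ioo_subset_Icc_self ht) hφ, hJdef]
      simp only [Pi.mul_apply]
      ring
    · have h0 : G1 (r, θ1, φ) = 0 := hG10 hr (left_mem_Icc.2 hθθ.le)
        (fun h => lt_irrefl θ1 h.1) hφ
      simp [h0]
    · have h0 : G1 (r, θ2, φ) = 0 := hG10 hr (right_mem_Icc.2 hθθ.le)
        (fun h => lt_irrefl θ2 h.2) hφ
      simp [h0]
  -- Step 7 : rewrite the right-hand side
  have step7 : wnorm R1 R2 θ1 θ2 φ1 φ2 (fun r θ => r ^ 2 * Real.sin θ / R1 ^ 2) (pr (pt v))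
      = ∫ r in Icc R1 R2, ∫ θ in Icc θ1 θ2, ∫ φ in Icc φ1 φ2, J (r, θ, φ) := by
    unfold wnorm
    apply iter_congr3
    intro r hr θ hθ φ hφ
    have hp := hmemS (Ioo_subset_Icc_self hr) (Ioo_subset_Icc_self hθ) (Ioo_subset_Icc_self hφ)
    rw [hprpt hr hθ (Ioo_subset_Icc_self hφ), hswap1 _ hp, hJdef]
  -- assembling everything
  have step3 : ∫ θ in Icc θ1 θ2, ∫ φ in Icc φ1 φ2, ∫ r in Icc R1 R2, It (r, θ, φ)
      = ∫ θ in Icc θ1 θ2, ∫ φ in Icc φ1 φ2, (- ∫ r in Icc R1 R2, K (r, θ, φ)) := by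
    refine setIntegral_congr_fun measurableSet_Icc (fun θ hθ => ?_)
    refine setIntegral_congr_fun measurableSet_Icc (fun φ hφ => ?_)
    exact hIBPr θ hθ φ hφ
  have step5 : ∫ r in Icc R1 R2, ∫ φ in Icc φ1 φ2, ∫ t in Icc θ1 θ2, K (r, t, φ)
      = ∫ r in Icc R1 R2, ∫ φ in Icc φ1 φ2, (- ∫ t in Icc θ1 θ2, J (r, t, φ)) := by
    have l1 : (∫ r in Icc R1 R2, ∫ φ in Icc φ1 φ2, ∫ t in Icc θ1 θ2, K (r, t, φ))
        = ∫ r in Ioo R1 R2, ∫ φ in Icc φ1 φ2, ∫ t in Icc θ1 θ2, K (r, t, φ) :=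
      integral_Icc_eq_integral_Ioo
    have l2 : (∫ r in Icc R1 R2, ∫ φ in Icc φ1 φ2, (- ∫ t in Icc θ1 θ2, J (r, t, φ)))
        = ∫ r in Ioo R1 R2, ∫ φ in Icc φ1 φ2, (- ∫ t in Icc θ1 θ2, J (r, t, φ)) :=
      integral_Icc_eq_integral_Ioo
    rw [l1, l2]
    refine setIntegral_congr_fun measurableSet_Ioo (fun r hr => ?_)
    refine setIntegral_congr_fun measurableSet_Icc (fun φ hφ => ?_)
    exact hIBPθ r hr φ hφ
  calc ipw R1 R2 θ1 θ2 φ1 φ2 (Drr (Dhtt R1 v)) v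
      = ∫ r in Icc R1 R2, ∫ θ in Icc θ1 θ2, ∫ φ in Icc φ1 φ2, It (r, θ, φ) := step1
    _ = ∫ θ in Icc θ1 θ2, ∫ φ in Icc φ1 φ2, ∫ r in Icc R1 R2, It (r, θ, φ) :=
        (fubini_cycle hItc).symm
    _ = ∫ θ in Icc θ1 θ2, ∫ φ in Icc φ1 φ2, (- ∫ r in Icc R1 R2, K (r, θ, φ)) := step3
    _ = - ∫ θ in Icc θ1 θ2, ∫ φ in Icc φ1 φ2, ∫ r in Icc R1 R2, K (r, θ, φ) := by
        simp only [integral_neg]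
    _ = - ∫ r in Icc R1 R2, ∫ θ in Icc θ1 θ2, ∫ φ in Icc φ1 φ2, K (r, θ, φ) := by
        rw [fubini_cycle hKc]
    _ = - ∫ r in Icc R1 R2, ∫ φ in Icc φ1 φ2, ∫ t in Icc θ1 θ2, K (r, t, φ) := by
        rw [fubini_swap23 hKc]
    _ = - ∫ r in Icc R1 R2, ∫ φ in Icc φ1 φ2, (- ∫ t in Icc θ1 θ2, J (r, t, φ)) := by
        rw [step5]
    _ = ∫ r in Icc R1 R2, ∫ φ in Icc φ1 φ2, ∫ t in Icc θ1 θ2, J (r, t, φ) := by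
        simp only [integral_neg, neg_neg]
    _ = ∫ r in Icc R1 R2, ∫ θ in Icc θ1 θ2, ∫ φ in Icc φ1 φ2, J (r, θ, φ) :=
        fubini_swap23 hJc
    _ = wnorm R1 R2 θ1 θ2 φ1 φ2 (fun r θ => r ^ 2 * Real.sin θ / R1 ^ 2) (pr (pt v)) :=
        step7.symm
end
end

section
/- Dissipativity identity for the θφ cross term: for every smooth function v on the closed box B vanishing on the boundary ∂B, ( D̂_θθ D̂_φφ v, v )_ω = ∫_B ( r² sin θ / (R1⁴ sin² θ1) ) |∂_θ ∂_φ v|² dr dθ dφ; in particular this quantity is nonnegative. -/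
open MeasureTheory Real Set

noncomputable section

namespace TPAux
open Filter Topology

/-- direction vectors -/
def eθ : ℝ × ℝ × ℝ := (0, 1, 0)
def eφ : ℝ × ℝ × ℝ := (0, 0, 1)

/-- within-set directional partial derivative -/
def Dd (s : Set (ℝ × ℝ × ℝ)) (w : ℝ × ℝ × ℝ) (g : ℝ × ℝ × ℝ → ℝ) : ℝ × ℝ × ℝ → ℝ :=
  fun p => fderivWithin ℝ g s p w

variable {a₁ b₁ a₂ b₂ a₃ b₃ : ℝ}

def Box (a₁ b₁ a₂ b₂ a₃ b₃ : ℝ) : Set (ℝ × ℝ × ℝ) := Icc a₁ b₁ ×ˢ Icc a₂ b₂ ×ˢ Icc a₃ b₃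
def OBox (a₁ b₁ a₂ b₂ a₃ b₃ : ℝ) : Set (ℝ × ℝ × ℝ) := Ioo a₁ b₁ ×ˢ Ioo a₂ b₂ ×ˢ Ioo a₃ b₃

lemma isOpen_OBox : IsOpen (OBox a₁ b₁ a₂ b₂ a₃ b₃) :=
  isOpen_Ioo.prod (isOpen_Ioo.prod isOpen_Ioo)

lemma OBox_subset : OBox a₁ b₁ a₂ b₂ a₃ b₃ ⊆ Box a₁ b₁ a₂ b₂ a₃ b₃ :=
  prod_mono Ioo_subset_Icc_self (prod_mono Ioo_subset_Icc_self Ioo_subset_Icc_self)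

lemma Box_mem_nhds {p : ℝ × ℝ × ℝ} (hp : p ∈ OBox a₁ b₁ a₂ b₂ a₃ b₃) :
    Box a₁ b₁ a₂ b₂ a₃ b₃ ∈ 𝓝 p :=
  mem_nhds_iff.2 ⟨_, OBox_subset, isOpen_OBox, hp⟩

lemma uniqueDiffOn_Box (h₁ : a₁ < b₁) (h₂ : a₂ < b₂) (h₃ : a₃ < b₃) :
    UniqueDiffOn ℝ (Box a₁ b₁ a₂ b₂ a₃ b₃) :=
  (uniqueDiffOn_Icc h₁).prod ((uniqueDiffOn_Icc h₂).prod (uniqueDiffOn_Icc h₃))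

lemma contDiffOn_Dd (h₁ : a₁ < b₁) (h₂ : a₂ < b₂) (h₃ : a₃ < b₃)
    {g : ℝ × ℝ × ℝ → ℝ} (hg : ContDiffOn ℝ (⊤ : ℕ∞) g (Box a₁ b₁ a₂ b₂ a₃ b₃)) (w : ℝ × ℝ × ℝ) :
    ContDiffOn ℝ (⊤ : ℕ∞) (Dd (Box a₁ b₁ a₂ b₂ a₃ b₃) w g) (Box a₁ b₁ a₂ b₂ a₃ b₃) :=
  (hg.fderivWithin (uniqueDiffOn_Box h₁ h₂ h₃) (by exact_mod_cast le_top)).clm_apply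
    contDiffOn_const


section Part2
variable {a₁ b₁ a₂ b₂ a₃ b₃ : ℝ} {g : ℝ × ℝ × ℝ → ℝ} {p : ℝ × ℝ × ℝ}

local notation "S" => Box a₁ b₁ a₂ b₂ a₃ b₃
local notation "O" => OBox a₁ b₁ a₂ b₂ a₃ b₃

lemma hasFDerivAt_of_mem (hg : ContDiffOn ℝ (⊤ : ℕ∞) g S) (hp : p ∈ O) :
    HasFDerivAt g (fderivWithin ℝ g S p) p := by
  rw [fderivWithin_of_mem_nhds (Box_mem_nhds hp)]
  exact ((hg.contDiffAt (Box_mem_nhds hp)).differentiableAt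
    (by simp)).hasFDerivAt

lemma hasDerivAt_slice2 (hg : ContDiffOn ℝ (⊤ : ℕ∞) g S) (hp : p ∈ O) :
    HasDerivAt (fun t => g (p.1, t, p.2.2)) (Dd S eθ g p) p.2.1 := by
  have hc : HasDerivAt (fun t : ℝ => ((p.1, t, p.2.2) : ℝ × ℝ × ℝ))
      ((0 : ℝ), (1 : ℝ), (0 : ℝ)) p.2.1 :=
    HasDerivAt.prodMk (hasDerivAt_const _ _) (HasDerivAt.prodMk (hasDerivAt_id _) (hasDerivAt_const _ _))
  exact (hasFDerivAt_of_mem hg hp).comp_hasDerivAt _ hc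

lemma hasDerivAt_slice3 (hg : ContDiffOn ℝ (⊤ : ℕ∞) g S) (hp : p ∈ O) :
    HasDerivAt (fun t => g (p.1, p.2.1, t)) (Dd S eφ g p) p.2.2 := by
  have hc : HasDerivAt (fun t : ℝ => ((p.1, p.2.1, t) : ℝ × ℝ × ℝ))
      ((0 : ℝ), (0 : ℝ), (1 : ℝ)) p.2.2 :=
    HasDerivAt.prodMk (hasDerivAt_const _ _) (HasDerivAt.prodMk (hasDerivAt_const _ _) (hasDerivAt_id _))
  exact (hasFDerivAt_of_mem hg hp).comp_hasDerivAt _ hc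

lemma ev_mem2 (hp : p ∈ O) : ∀ᶠ t in 𝓝 p.2.1, ((p.1, t, p.2.2) : ℝ × ℝ × ℝ) ∈ O := by
  have hc : ContinuousAt (fun t : ℝ => ((p.1, t, p.2.2) : ℝ × ℝ × ℝ)) p.2.1 := by fun_prop
  exact hc.preimage_mem_nhds (isOpen_OBox.mem_nhds hp)

lemma ev_mem3 (hp : p ∈ O) : ∀ᶠ t in 𝓝 p.2.2, ((p.1, p.2.1, t) : ℝ × ℝ × ℝ) ∈ O := by
  have hc : ContinuousAt (fun t : ℝ => ((p.1, p.2.1, t) : ℝ × ℝ × ℝ)) p.2.2 := by fun_prop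
  exact hc.preimage_mem_nhds (isOpen_OBox.mem_nhds hp)

/-- compute a θ-slice `deriv` of a function agreeing with `g` on the open box -/
lemma deriv_slice2 (hg : ContDiffOn ℝ (⊤ : ℕ∞) g S) (hp : p ∈ O) {f : ℝ → ℝ}
    (hf : ∀ t, ((p.1, t, p.2.2) : ℝ × ℝ × ℝ) ∈ O → f t = g (p.1, t, p.2.2)) :
    deriv f p.2.1 = Dd S eθ g p := by
  have hev : f =ᶠ[𝓝 p.2.1] fun t => g (p.1, t, p.2.2) := by
    filter_upwards [ev_mem2 hp] with t ht using hf t ht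
  rw [hev.deriv_eq, (hasDerivAt_slice2 hg hp).deriv]

lemma deriv_slice3 (hg : ContDiffOn ℝ (⊤ : ℕ∞) g S) (hp : p ∈ O) {f : ℝ → ℝ}
    (hf : ∀ t, ((p.1, p.2.1, t) : ℝ × ℝ × ℝ) ∈ O → f t = g (p.1, p.2.1, t)) :
    deriv f p.2.2 = Dd S eφ g p := by
  have hev : f =ᶠ[𝓝 p.2.2] fun t => g (p.1, p.2.1, t) := by
    filter_upwards [ev_mem3 hp] with t ht using hf t ht
  rw [hev.deriv_eq, (hasDerivAt_slice3 hg hp).deriv]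

/-- `Dd` only depends on values on the open box, at interior points -/
lemma Dd_congr_O {g₁ g₂ : ℝ × ℝ × ℝ → ℝ} (hp : p ∈ O)
    (h : ∀ q ∈ O, g₁ q = g₂ q) (w : ℝ × ℝ × ℝ) :
    Dd S w g₁ p = Dd S w g₂ p := by
  have hev : g₁ =ᶠ[𝓝 p] g₂ := by
    filter_upwards [isOpen_OBox.mem_nhds hp] with q hq using h q hq
  simp only [Dd, fderivWithin_of_mem_nhds (Box_mem_nhds hp)]
  rw [hev.fderiv_eq]

/-- Clairaut / Schwarz on the open box -/
lemma Dd_comm (hg : ContDiffOn ℝ (⊤ : ℕ∞) g S) (hp : p ∈ O) (w₁ w₂ : ℝ × ℝ × ℝ) :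
    Dd S w₁ (Dd S w₂ g) p = Dd S w₂ (Dd S w₁ g) p := by
  have hev : ∀ᶠ q in 𝓝 p, HasFDerivAt g (fderiv ℝ g q) q := by
    filter_upwards [isOpen_OBox.mem_nhds hp] with q hq
    exact ((hg.contDiffAt (Box_mem_nhds hq)).differentiableAt
      (by simp)).hasFDerivAt
  have hf'' : HasFDerivAt (fderiv ℝ g) (fderiv ℝ (fderiv ℝ g) p) p :=
    (((hg.contDiffAt (Box_mem_nhds hp)).fderiv_right (m := (⊤ : ℕ∞))
      le_rfl).differentiableAt (by simp)).hasFDerivAt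
  have hsymm := second_derivative_symmetric_of_eventually hev hf'' w₁ w₂
  have key : ∀ w w' : ℝ × ℝ × ℝ, Dd S w (Dd S w' g) p = fderiv ℝ (fderiv ℝ g) p w w' := by
    intro w w'
    have h1 : Dd S w' g =ᶠ[𝓝 p] fun q => fderiv ℝ g q w' := by
      filter_upwards [isOpen_OBox.mem_nhds hp] with q hq
      simp only [Dd, fderivWithin_of_mem_nhds (Box_mem_nhds hq)]
    have heval : HasFDerivAt (fun q => fderiv ℝ g q w')
        ((ContinuousLinearMap.apply ℝ ℝ w').comp (fderiv ℝ (fderiv ℝ g) p)) p :=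
      (ContinuousLinearMap.apply ℝ ℝ w').hasFDerivAt.comp p hf''
    simp only [Dd]
    rw [fderivWithin_of_mem_nhds (Box_mem_nhds hp), h1.fderiv_eq, heval.fderiv]
    rfl
  rw [key w₁ w₂, key w₂ w₁, hsymm]

end Part2

section Part3
variable {a₁ b₁ a₂ b₂ a₃ b₃ : ℝ} {g : ℝ × ℝ × ℝ → ℝ} {p : ℝ × ℝ × ℝ}

local notation "S" => Box a₁ b₁ a₂ b₂ a₃ b₃
local notation "O" => OBox a₁ b₁ a₂ b₂ a₃ b₃

/-- the φ-directional within-derivative vanishes where `g` vanishes on a φ-segment -/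
lemma Dd_eφ_zero (h₃ : a₃ < b₃)
    (hg : ContDiffOn ℝ (⊤ : ℕ∞) g S) {r θ φ : ℝ}
    (hp : ((r, θ, φ) : ℝ × ℝ × ℝ) ∈ S)
    (hz : ∀ t ∈ Icc a₃ b₃, g (r, θ, t) = 0) :
    Dd S eφ g (r, θ, φ) = 0 := by
  obtain ⟨h1, h2, h3⟩ := hp
  have hdiff : DifferentiableWithinAt ℝ g S (r, θ, φ) :=
    (hg (r, θ, φ) ⟨h1, h2, h3⟩).differentiableWithinAt (by simp)
  have hcurve : HasDerivWithinAt (fun t : ℝ => ((r, θ, t) : ℝ × ℝ × ℝ)) eφ (Icc a₃ b₃) φ :=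
    ((HasDerivAt.prodMk (hasDerivAt_const _ _) (HasDerivAt.prodMk (hasDerivAt_const _ _)
      (hasDerivAt_id _))) : HasDerivAt _ (((0:ℝ),(0:ℝ),(1:ℝ)) : ℝ × ℝ × ℝ) _).hasDerivWithinAt
  have hmaps : MapsTo (fun t : ℝ => ((r, θ, t) : ℝ × ℝ × ℝ)) (Icc a₃ b₃) S :=
    fun t ht => ⟨h1, h2, ht⟩
  have hcomp : HasDerivWithinAt (fun t : ℝ => g (r, θ, t))
      (Dd S eφ g (r, θ, φ)) (Icc a₃ b₃) φ :=
    hdiff.hasFDerivWithinAt.comp_hasDerivWithinAt φ hcurve hmaps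
  have hzero : HasDerivWithinAt (fun t : ℝ => g (r, θ, t)) 0 (Icc a₃ b₃) φ :=
    (hasDerivWithinAt_const φ _ (0:ℝ)).congr (fun t ht => hz t ht) (hz φ h3)
  have hu : UniqueDiffWithinAt ℝ (Icc a₃ b₃) φ := uniqueDiffOn_Icc h₃ φ h3
  rw [← hcomp.derivWithin hu, hzero.derivWithin hu]

/-- the φ-within-derivative of `sin θ * g` on interior points -/
lemma Dd_eφ_sin_mul (hg : ContDiffOn ℝ (⊤ : ℕ∞) g S) (hp : p ∈ O) :
    Dd S eφ (fun q => Real.sin q.2.1 * g q) p = Real.sin p.2.1 * Dd S eφ g p := by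
  have hL : HasFDerivAt (fun q : ℝ × ℝ × ℝ => q.2.1)
      ((ContinuousLinearMap.fst ℝ ℝ ℝ).comp (ContinuousLinearMap.snd ℝ ℝ (ℝ × ℝ))) p :=
    ((ContinuousLinearMap.fst ℝ ℝ ℝ).comp (ContinuousLinearMap.snd ℝ ℝ (ℝ × ℝ))).hasFDerivAt
  have hsin : HasFDerivAt (fun q : ℝ × ℝ × ℝ => Real.sin q.2.1)
      (Real.cos p.2.1 • ((ContinuousLinearMap.fst ℝ ℝ ℝ).comp
        (ContinuousLinearMap.snd ℝ ℝ (ℝ × ℝ)))) p :=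
    by have := (Real.hasDerivAt_sin p.2.1).comp_hasFDerivAt p hL; exact this
  have hgf : HasFDerivAt g (fderivWithin ℝ g S p) p := hasFDerivAt_of_mem hg hp
  have hmul := hsin.mul hgf
  have : Dd S eφ (fun q => Real.sin q.2.1 * g q) p = fderiv ℝ (fun q => Real.sin q.2.1 * g q) p eφ := by
    simp only [Dd]
    rw [fderivWithin_of_mem_nhds (Box_mem_nhds hp)]
  rw [this, show (fun q => Real.sin q.2.1 * g q) = (fun q : ℝ × ℝ × ℝ => Real.sin q.2.1) * g from rfl, hmul.fderiv]
  simp [eφ, Dd]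

end Part3

section Part4
variable {a₁ b₁ a₂ b₂ a₃ b₃ : ℝ}

local notation "S" => Box a₁ b₁ a₂ b₂ a₃ b₃

/-- FTC on a closed interval with derivative data only in the interior -/
lemma ftc_Icc {a b : ℝ} (hab : a < b) {g g' : ℝ → ℝ}
    (hcont : ContinuousOn g (Icc a b))
    (hderiv : ∀ x ∈ Ioo a b, HasDerivAt g (g' x) x)
    (hint : ContinuousOn g' (Icc a b)) :
    ∫ x in Icc a b, g' x = g b - g a := by
  rw [MeasureTheory.integral_Icc_eq_integral_Ioc, ← intervalIntegral.integral_of_le hab.le]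
  exact intervalIntegral.integral_eq_sub_of_hasDeriv_right_of_le hab.le hcont
    (fun x hx => (hderiv x hx).hasDerivWithinAt)
    ((uIcc_of_le hab.le).symm ▸ hint).intervalIntegrable

lemma integral_Icc_congr_Ioo {a b : ℝ} {f g : ℝ → ℝ} (h : ∀ x ∈ Ioo a b, f x = g x) :
    ∫ x in Icc a b, f x = ∫ x in Icc a b, g x := by
  rw [← MeasureTheory.setIntegral_congr_set (Ioo_ae_eq_Icc (μ := volume) (a := a) (b := b)),
    ← MeasureTheory.setIntegral_congr_set (Ioo_ae_eq_Icc (μ := volume) (a := a) (b := b))]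
  exact MeasureTheory.setIntegral_congr_fun measurableSet_Ioo h

lemma swap_Icc {a b c d : ℝ} {f : ℝ → ℝ → ℝ}
    (hf : ContinuousOn (fun q : ℝ × ℝ => f q.1 q.2) (Icc a b ×ˢ Icc c d)) :
    ∫ x in Icc a b, ∫ y in Icc c d, f x y = ∫ y in Icc c d, ∫ x in Icc a b, f x y := by
  apply MeasureTheory.integral_integral_swap
  have h : IntegrableOn (fun q : ℝ × ℝ => f q.1 q.2) (Icc a b ×ˢ Icc c d) volume :=
    hf.integrableOn_compact (isCompact_Icc.prod isCompact_Icc)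
  rw [IntegrableOn, MeasureTheory.Measure.volume_eq_prod,
    ← MeasureTheory.Measure.prod_restrict] at h
  exact h

/-- continuity of θ-slices -/
lemma contOn_slice2 {F : ℝ × ℝ × ℝ → ℝ} (hF : ContinuousOn F S) {r φ : ℝ}
    (hr : r ∈ Icc a₁ b₁) (hφ : φ ∈ Icc a₃ b₃) :
    ContinuousOn (fun t => F (r, t, φ)) (Icc a₂ b₂) :=
  hF.comp ((continuous_const.prodMk (continuous_id.prodMk continuous_const)).continuousOn)
    (fun t ht => ⟨hr, ht, hφ⟩)

/-- continuity of φ-slices -/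
lemma contOn_slice3 {F : ℝ × ℝ × ℝ → ℝ} (hF : ContinuousOn F S) {r θ : ℝ}
    (hr : r ∈ Icc a₁ b₁) (hθ : θ ∈ Icc a₂ b₂) :
    ContinuousOn (fun t => F (r, θ, t)) (Icc a₃ b₃) :=
  hF.comp ((continuous_const.prodMk (continuous_const.prodMk continuous_id)).continuousOn)
    (fun t ht => ⟨hr, hθ, ht⟩)

/-- continuity of (φ,θ)-slices -/
lemma contOn_slice32 {F : ℝ × ℝ × ℝ → ℝ} (hF : ContinuousOn F S) {r : ℝ}
    (hr : r ∈ Icc a₁ b₁) :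
    ContinuousOn (fun q : ℝ × ℝ => F (r, q.2, q.1)) (Icc a₃ b₃ ×ˢ Icc a₂ b₂) :=
  hF.comp ((continuous_const.prodMk (continuous_snd.prodMk continuous_fst)).continuousOn)
    (fun q hq => ⟨hr, hq.2, hq.1⟩)

/-- continuity of (θ,φ)-slices -/
lemma contOn_slice23 {F : ℝ × ℝ × ℝ → ℝ} (hF : ContinuousOn F S) {r : ℝ}
    (hr : r ∈ Icc a₁ b₁) :
    ContinuousOn (fun q : ℝ × ℝ => F (r, q.1, q.2)) (Icc a₂ b₂ ×ˢ Icc a₃ b₃) :=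
  hF.comp ((continuous_const.prodMk (continuous_fst.prodMk continuous_snd)).continuousOn)
    (fun q hq => ⟨hr, hq.1, hq.2⟩)

end Part4
end TPAux

open TPAux Filter Topology in
theorem thetaphi_cross_term_dissipative
    (R1 R2 θ1 θ2 φ1 φ2 : ℝ)
    (hR1 : 0 < R1) (hRR : R1 < R2)
    (hθ1 : 0 < θ1) (hθθ : θ1 < θ2) (hθ2 : θ2 < Real.pi)
    (hφ : φ1 < φ2)
    (v : ℝ → ℝ → ℝ → ℝ)
    (hv : SmoothOnBox R1 R2 θ1 θ2 φ1 φ2 v)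
    (hv0 : VanishOnBdry R1 R2 θ1 θ2 φ1 φ2 v) :
    ipw R1 R2 θ1 θ2 φ1 φ2 (Dhtt R1 (Dhpp R1 θ1 v)) v
    = wnorm R1 R2 θ1 θ2 φ1 φ2 (fun r θ => r ^ 2 * Real.sin θ / (R1 ^ 4 * Real.sin θ1 ^ 2)) (pt (pp v)) := by
  have hsθ1 : Real.sin θ1 ≠ 0 := (Real.sin_pos_of_pos_of_lt_pi hθ1 (hθθ.trans hθ2)).ne'
  set c : ℝ := 1 / (R1 ^ 2 * Real.sin θ1 ^ 2) with hc
  set S : Set (ℝ × ℝ × ℝ) := Box R1 R2 θ1 θ2 φ1 φ2 with hSdef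
  set O : Set (ℝ × ℝ × ℝ) := OBox R1 R2 θ1 θ2 φ1 φ2 with hOdef
  set V : ℝ × ℝ × ℝ → ℝ := fun p => v p.1 p.2.1 p.2.2 with hVdef
  have hV : ContDiffOn ℝ (⊤ : ℕ∞) V S := ContDiffOn.of_le hv (by simp)
  have hzero : ∀ p : ℝ × ℝ × ℝ, p ∈ S → p ∉ O → V p = 0 := by
    intro p hpS hpO
    apply hv0
    have hcl : IsClosed (SBox R1 R2 θ1 θ2 φ1 φ2) :=
      isClosed_Icc.prod (isClosed_Icc.prod isClosed_Icc)
    have hfr : frontier (SBox R1 R2 θ1 θ2 φ1 φ2) = S \ O := by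
      rw [hcl.frontier_eq]
      have hint : interior (SBox R1 R2 θ1 θ2 φ1 φ2) = O := by
        rw [hOdef]
        show interior (Icc R1 R2 ×ˢ Icc θ1 θ2 ×ˢ Icc φ1 φ2) = _
        rw [interior_prod_eq, interior_prod_eq, interior_Icc, interior_Icc, interior_Icc]
        rfl
      rw [hint]
      rfl
    rw [hfr]
    exact ⟨hpS, hpO⟩
  set A : ℝ × ℝ × ℝ → ℝ := Dd S eφ V with hAdef
  set B : ℝ × ℝ × ℝ → ℝ := Dd S eφ A with hBdef
  set Q : ℝ × ℝ × ℝ → ℝ := Dd S eθ B with hQdef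
  set SQ : ℝ × ℝ × ℝ → ℝ := fun p => Real.sin p.2.1 * Q p with hSQdef
  set P : ℝ × ℝ × ℝ → ℝ := Dd S eθ SQ with hPdef
  set N : ℝ × ℝ × ℝ → ℝ := Dd S eθ A with hNdef
  set U : ℝ × ℝ × ℝ → ℝ := fun p => Real.sin p.2.1 * N p with hUdef
  set W : ℝ × ℝ × ℝ → ℝ := Dd S eθ U with hWdef
  have hsin : ContDiffOn ℝ (⊤ : ℕ∞) (fun q : ℝ × ℝ × ℝ => Real.sin q.2.1) S :=
    (Real.contDiff_sin.comp (contDiff_fst.comp contDiff_snd)).contDiffOn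
  have hA' : ContDiffOn ℝ (⊤ : ℕ∞) A S := contDiffOn_Dd hRR hθθ hφ hV eφ
  have hB' : ContDiffOn ℝ (⊤ : ℕ∞) B S := contDiffOn_Dd hRR hθθ hφ hA' eφ
  have hQ' : ContDiffOn ℝ (⊤ : ℕ∞) Q S := contDiffOn_Dd hRR hθθ hφ hB' eθ
  have hSQ' : ContDiffOn ℝ (⊤ : ℕ∞) SQ S := hsin.mul hQ'
  have hP' : ContDiffOn ℝ (⊤ : ℕ∞) P S := contDiffOn_Dd hRR hθθ hφ hSQ' eθ
  have hN' : ContDiffOn ℝ (⊤ : ℕ∞) N S := contDiffOn_Dd hRR hθθ hφ hA' eθ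
  have hU' : ContDiffOn ℝ (⊤ : ℕ∞) U S := hsin.mul hN'
  have hW' : ContDiffOn ℝ (⊤ : ℕ∞) W S := contDiffOn_Dd hRR hθθ hφ hU' eθ
  -- pointwise identifications on the open box
  have hppv : ∀ p ∈ O, pp v p.1 p.2.1 p.2.2 = A p := by
    intro p hp
    exact (hasDerivAt_slice3 hV hp).deriv
  have hBpt : ∀ p ∈ O, pp (pp v) p.1 p.2.1 p.2.2 = B p := by
    intro p hp
    exact deriv_slice3 hA' hp (fun t ht => hppv _ ht)
  have hQpt : ∀ p ∈ O, pt (pp (pp v)) p.1 p.2.1 p.2.2 = Q p := by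
    intro p hp
    exact deriv_slice2 hB' hp (fun t ht => hBpt _ ht)
  have hNpt : ∀ p ∈ O, pt (pp v) p.1 p.2.1 p.2.2 = N p := by
    intro p hp
    exact deriv_slice2 hA' hp (fun t ht => hppv _ ht)
  -- Clairaut chain : P = ∂_φ W on the open box
  have hPW : ∀ q ∈ O, P q = Dd S eφ W q := by
    intro q hq
    have h1 : ∀ q' ∈ O, SQ q' = Dd S eφ U q' := by
      intro q' hq'
      have hQN : Q q' = Dd S eφ N q' := Dd_comm hA' hq' eθ eφ
      have hmul : Dd S eφ U q' = Real.sin q'.2.1 * Dd S eφ N q' := Dd_eφ_sin_mul hN' hq'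
      show Real.sin q'.2.1 * Q q' = Dd S eφ U q'
      rw [hQN, hmul]
    calc P q = Dd S eθ SQ q := rfl
      _ = Dd S eθ (Dd S eφ U) q := Dd_congr_O hq h1 eθ
      _ = Dd S eφ (Dd S eθ U) q := Dd_comm hU' hq eθ eφ
      _ = Dd S eφ W q := rfl
  -- boundary vanishing of A at θ-endpoints
  have hAθbdry : ∀ r ∈ Icc R1 R2, ∀ θ : ℝ, (θ = θ1 ∨ θ = θ2) → ∀ φ ∈ Icc φ1 φ2,
      A (r, θ, φ) = 0 := by
    intro r hr θ hθe φ hφm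
    have hθm : θ ∈ Icc θ1 θ2 := by
      rcases hθe with h | h <;> rw [h]
      · exact left_mem_Icc.2 hθθ.le
      · exact right_mem_Icc.2 hθθ.le
    refine Dd_eφ_zero hφ hV ⟨hr, hθm, hφm⟩ ?_
    intro t ht
    refine hzero (r, θ, t) ⟨hr, hθm, ht⟩ ?_
    intro hO
    rcases hθe with h | h
    · exact absurd (h ▸ hO.2.1.1) (lt_irrefl θ1)
    · exact absurd (h ▸ hO.2.1.2) (lt_irrefl θ2)
  -- main computation, slice by slice in r
  simp only [ipw, wnorm]
  apply integral_Icc_congr_Ioo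
  intro r hr
  set k : ℝ := c * r ^ 2 / R1 ^ 2 with hk
  have hrIcc : r ∈ Icc R1 R2 := Ioo_subset_Icc_self hr
  have hLHSpt : ∀ θ ∈ Ioo θ1 θ2, ∀ φ ∈ Ioo φ1 φ2,
      Dhtt R1 (Dhpp R1 θ1 v) r θ φ * v r θ φ * (r ^ 2 * Real.sin θ)
        = k * (P (r, θ, φ) * V (r, θ, φ)) := by
    intro θ hθm φ hφm
    have hp : ((r, θ, φ) : ℝ × ℝ × ℝ) ∈ O := ⟨hr, hθm, hφm⟩
    have hsθ : Real.sin θ ≠ 0 :=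
      (Real.sin_pos_of_pos_of_lt_pi (hθ1.trans hθm.1) (hθm.2.trans hθ2)).ne'
    have h1 : pt (fun r' θ' φ' => Real.sin θ' * pt (Dhpp R1 θ1 v) r' θ' φ') r θ φ
        = c * P (r, θ, φ) := by
      have hev : (fun t => Real.sin t * pt (Dhpp R1 θ1 v) r t φ)
          =ᶠ[𝓝 θ] fun t => c * SQ (r, t, φ) := by
        filter_upwards [ev_mem2 hp] with t ht
        have h2 : pt (Dhpp R1 θ1 v) r t φ = c * pt (pp (pp v)) r t φ := by
          simp only [pt, Dhpp]
          exact deriv_const_mul_field _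
        have h3 : pt (pp (pp v)) r t φ = Q (r, t, φ) := hQpt _ ht
        rw [h2, h3]
        show Real.sin t * (c * Q (r, t, φ)) = c * (Real.sin t * Q (r, t, φ))
        ring
      have h6 : deriv (fun t => SQ (r, t, φ)) θ = P (r, θ, φ) :=
        (hasDerivAt_slice2 hSQ' hp).deriv
      show deriv (fun t => Real.sin t * pt (Dhpp R1 θ1 v) r t φ) θ = c * P (r, θ, φ)
      rw [hev.deriv_eq, deriv_const_mul_field, h6]
    show (1 / (R1 ^ 2 * Real.sin θ)) *
        pt (fun r' θ' φ' => Real.sin θ' * pt (Dhpp R1 θ1 v) r' θ' φ') r θ φ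
        * v r θ φ * (r ^ 2 * Real.sin θ) = k * (P (r, θ, φ) * V (r, θ, φ))
    rw [h1]
    have hvV : v r θ φ = V (r, θ, φ) := rfl
    rw [hvV, hk]
    field_simp
  -- φ-integration by parts
  have hφint : ∀ θ ∈ Ioo θ1 θ2,
      ∫ φ in Icc φ1 φ2,
        (P (r, θ, φ) * V (r, θ, φ) + W (r, θ, φ) * A (r, θ, φ)) = 0 := by
    intro θ hθm
    have hθIcc : θ ∈ Icc θ1 θ2 := Ioo_subset_Icc_self hθm
    have hcont : ContinuousOn (fun t => W (r, θ, t) * V (r, θ, t)) (Icc φ1 φ2) :=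
      (contOn_slice3 hW'.continuousOn hrIcc hθIcc).mul
        (contOn_slice3 hV.continuousOn hrIcc hθIcc)
    have hderiv : ∀ t ∈ Ioo φ1 φ2, HasDerivAt (fun s => W (r, θ, s) * V (r, θ, s))
        (P (r, θ, t) * V (r, θ, t) + W (r, θ, t) * A (r, θ, t)) t := by
      intro t ht
      have hp : ((r, θ, t) : ℝ × ℝ × ℝ) ∈ O := ⟨hr, hθm, ht⟩
      have d1 : HasDerivAt (fun s => W (r, θ, s)) (P (r, θ, t)) t := by
        have hd := hasDerivAt_slice3 hW' hp
        have he : Dd S eφ W (r, θ, t) = P (r, θ, t) := (hPW _ hp).symm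
        rw [he] at hd
        exact hd
      have d2 : HasDerivAt (fun s => V (r, θ, s)) (A (r, θ, t)) t :=
        hasDerivAt_slice3 hV hp
      exact d1.mul d2
    have hint : ContinuousOn (fun t => P (r, θ, t) * V (r, θ, t)
        + W (r, θ, t) * A (r, θ, t)) (Icc φ1 φ2) :=
      ((contOn_slice3 hP'.continuousOn hrIcc hθIcc).mul
        (contOn_slice3 hV.continuousOn hrIcc hθIcc)).add
        ((contOn_slice3 hW'.continuousOn hrIcc hθIcc).mul
          (contOn_slice3 hA'.continuousOn hrIcc hθIcc))
    rw [ftc_Icc hφ hcont hderiv hint]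
    have hb1 : V (r, θ, φ1) = 0 := by
      refine hzero _ ⟨hrIcc, hθIcc, left_mem_Icc.2 hφ.le⟩ ?_
      intro hO
      exact absurd hO.2.2.1 (lt_irrefl φ1)
    have hb2 : V (r, θ, φ2) = 0 := by
      refine hzero _ ⟨hrIcc, hθIcc, right_mem_Icc.2 hφ.le⟩ ?_
      intro hO
      exact absurd hO.2.2.2 (lt_irrefl φ2)
    rw [hb1, hb2]
    ring
  -- θ-integration by parts
  have hθint : ∀ φ ∈ Ioo φ1 φ2,
      ∫ θ in Icc θ1 θ2,
        (W (r, θ, φ) * A (r, θ, φ) + Real.sin θ * N (r, θ, φ) ^ 2) = 0 := by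
    intro φ hφm
    have hφIcc : φ ∈ Icc φ1 φ2 := Ioo_subset_Icc_self hφm
    have hcont : ContinuousOn (fun t => U (r, t, φ) * A (r, t, φ)) (Icc θ1 θ2) :=
      (contOn_slice2 hU'.continuousOn hrIcc hφIcc).mul
        (contOn_slice2 hA'.continuousOn hrIcc hφIcc)
    have hderiv : ∀ t ∈ Ioo θ1 θ2, HasDerivAt (fun s => U (r, s, φ) * A (r, s, φ))
        (W (r, t, φ) * A (r, t, φ) + Real.sin t * N (r, t, φ) ^ 2) t := by
      intro t ht
      have hp : ((r, t, φ) : ℝ × ℝ × ℝ) ∈ O := ⟨hr, ht, hφm⟩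
      have d1 : HasDerivAt (fun s => U (r, s, φ)) (W (r, t, φ)) t :=
        hasDerivAt_slice2 hU' hp
      have d2 : HasDerivAt (fun s => A (r, s, φ)) (N (r, t, φ)) t :=
        hasDerivAt_slice2 hA' hp
      have : HasDerivAt (fun s => U (r, s, φ) * A (r, s, φ)) _ t := d1.mul d2
      convert this using 1
      show W (r, t, φ) * A (r, t, φ) + Real.sin t * N (r, t, φ) ^ 2
          = W (r, t, φ) * A (r, t, φ) + U (r, t, φ) * N (r, t, φ)
      have hU2 : U (r, t, φ) = Real.sin t * N (r, t, φ) := rfl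
      rw [hU2]
      ring
    have hint : ContinuousOn (fun t => W (r, t, φ) * A (r, t, φ)
        + Real.sin t * N (r, t, φ) ^ 2) (Icc θ1 θ2) := by
      apply ContinuousOn.add
      · exact (contOn_slice2 hW'.continuousOn hrIcc hφIcc).mul
          (contOn_slice2 hA'.continuousOn hrIcc hφIcc)
      · exact Real.continuous_sin.continuousOn.mul
          ((contOn_slice2 hN'.continuousOn hrIcc hφIcc).pow 2)
    rw [ftc_Icc hθθ hcont hderiv hint]
    rw [hAθbdry r hrIcc θ1 (Or.inl rfl) φ hφIcc, hAθbdry r hrIcc θ2 (Or.inr rfl) φ hφIcc]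
    ring
  -- continuity on the 2d box for Fubini
  have hWA2 : ContinuousOn (fun q : ℝ × ℝ => W (r, q.1, q.2) * A (r, q.1, q.2))
      (Icc θ1 θ2 ×ˢ Icc φ1 φ2) :=
    (contOn_slice23 hW'.continuousOn hrIcc).mul (contOn_slice23 hA'.continuousOn hrIcc)
  have hsinN2 : ContinuousOn (fun q : ℝ × ℝ => Real.sin q.2 * N (r, q.2, q.1) ^ 2)
      (Icc φ1 φ2 ×ˢ Icc θ1 θ2) :=
    (Real.continuous_sin.comp continuous_snd).continuousOn.mul
      ((contOn_slice32 hN'.continuousOn hrIcc).pow 2)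
  calc ∫ θ in Icc θ1 θ2, ∫ φ in Icc φ1 φ2,
        Dhtt R1 (Dhpp R1 θ1 v) r θ φ * v r θ φ * (r ^ 2 * Real.sin θ)
      = ∫ θ in Icc θ1 θ2, (-k) * ∫ φ in Icc φ1 φ2, W (r, θ, φ) * A (r, θ, φ) := by
        apply integral_Icc_congr_Ioo
        intro θ hθm
        have hθIcc : θ ∈ Icc θ1 θ2 := Ioo_subset_Icc_self hθm
        have hIPV : IntegrableOn (fun φ => P (r, θ, φ) * V (r, θ, φ)) (Icc φ1 φ2) volume :=
          ((contOn_slice3 hP'.continuousOn hrIcc hθIcc).mul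
            (contOn_slice3 hV.continuousOn hrIcc hθIcc)).integrableOn_Icc
        have hIWA : IntegrableOn (fun φ => W (r, θ, φ) * A (r, θ, φ)) (Icc φ1 φ2) volume :=
          ((contOn_slice3 hW'.continuousOn hrIcc hθIcc).mul
            (contOn_slice3 hA'.continuousOn hrIcc hθIcc)).integrableOn_Icc
        have e1 : ∫ φ in Icc φ1 φ2,
            Dhtt R1 (Dhpp R1 θ1 v) r θ φ * v r θ φ * (r ^ 2 * Real.sin θ)
            = ∫ φ in Icc φ1 φ2, k * (P (r, θ, φ) * V (r, θ, φ)) :=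
          integral_Icc_congr_Ioo (fun φ hφm => hLHSpt θ hθm φ hφm)
        have e2 : (∫ φ in Icc φ1 φ2, P (r, θ, φ) * V (r, θ, φ))
            + ∫ φ in Icc φ1 φ2, W (r, θ, φ) * A (r, θ, φ) = 0 := by
          rw [← MeasureTheory.integral_add hIPV hIWA]
          exact hφint θ hθm
        rw [e1, MeasureTheory.integral_const_mul]
        have hXY : (∫ φ in Icc φ1 φ2, P (r, θ, φ) * V (r, θ, φ))
            = - ∫ φ in Icc φ1 φ2, W (r, θ, φ) * A (r, θ, φ) := by linarith
        rw [hXY]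
        ring
    _ = (-k) * ∫ θ in Icc θ1 θ2, ∫ φ in Icc φ1 φ2, W (r, θ, φ) * A (r, θ, φ) :=
        MeasureTheory.integral_const_mul _ _
    _ = (-k) * ∫ φ in Icc φ1 φ2, ∫ θ in Icc θ1 θ2, W (r, θ, φ) * A (r, θ, φ) := by
        rw [swap_Icc hWA2]
    _ = (-k) * ∫ φ in Icc φ1 φ2, (- ∫ θ in Icc θ1 θ2, Real.sin θ * N (r, θ, φ) ^ 2) := by
        congr 1
        apply integral_Icc_congr_Ioo
        intro φ hφm
        have hφIcc : φ ∈ Icc φ1 φ2 := Ioo_subset_Icc_self hφm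
        have hIWA : IntegrableOn (fun θ => W (r, θ, φ) * A (r, θ, φ)) (Icc θ1 θ2) volume :=
          ((contOn_slice2 hW'.continuousOn hrIcc hφIcc).mul
            (contOn_slice2 hA'.continuousOn hrIcc hφIcc)).integrableOn_Icc
        have hIsN : IntegrableOn (fun θ => Real.sin θ * N (r, θ, φ) ^ 2) (Icc θ1 θ2) volume :=
          (Real.continuous_sin.continuousOn.mul
            ((contOn_slice2 hN'.continuousOn hrIcc hφIcc).pow 2)).integrableOn_Icc
        have e3 : (∫ θ in Icc θ1 θ2, W (r, θ, φ) * A (r, θ, φ))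
            + ∫ θ in Icc θ1 θ2, Real.sin θ * N (r, θ, φ) ^ 2 = 0 := by
          rw [← MeasureTheory.integral_add hIWA hIsN]
          exact hθint φ hφm
        linarith
    _ = k * ∫ φ in Icc φ1 φ2, ∫ θ in Icc θ1 θ2, Real.sin θ * N (r, θ, φ) ^ 2 := by
        rw [MeasureTheory.integral_neg]
        ring
    _ = k * ∫ θ in Icc θ1 θ2, ∫ φ in Icc φ1 φ2, Real.sin θ * N (r, θ, φ) ^ 2 := by
        rw [swap_Icc hsinN2]
    _ = ∫ θ in Icc θ1 θ2, ∫ φ in Icc φ1 φ2,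
        r ^ 2 * Real.sin θ / (R1 ^ 4 * Real.sin θ1 ^ 2) * (pt (pp v) r θ φ) ^ 2 := by
        rw [← MeasureTheory.integral_const_mul]
        apply integral_Icc_congr_Ioo
        intro θ hθm
        rw [← MeasureTheory.integral_const_mul]
        apply integral_Icc_congr_Ioo
        intro φ hφm
        have hp : ((r, θ, φ) : ℝ × ℝ × ℝ) ∈ O := ⟨hr, hθm, hφm⟩
        have h5 : pt (pp v) r θ φ = N (r, θ, φ) := hNpt _ hp
        rw [h5, hk, hc]
        field_simp
end
end

section
/- Dissipativity identity for the triple-product term: for every smooth function v on the closed box B vanishing on the boundary ∂B, −( D_rr D̂_θθ D̂_φφ v, v )_ω = ∫_B ( r² sin θ / (R1⁴ sin² θ1) ) |∂_r ∂_θ ∂_φ v|² dr dθ dφ; in particular this quantity is nonnegative. -/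
open MeasureTheory Real Set

noncomputable section

namespace TripleAux
open scoped ContDiff
open Topology Filter

lemma wle1 : (∞ : WithTop ℕ∞) ≠ 0 := by simp
lemma wle2 : minSmoothness ℝ 2 ≤ ∞ := by
  rw [minSmoothness_of_isRCLikeNormedField]
  rw [show ((2:WithTop ℕ∞)) = ((2:ℕ∞):WithTop ℕ∞) from rfl]
  exact WithTop.coe_le_coe.2 le_top
lemma wadd1 : (∞ : WithTop ℕ∞) + 1 ≤ ∞ := le_of_eq rfl

section Box
variable {R1 R2 θ1 θ2 φ1 φ2 : ℝ} {F : ℝ×ℝ×ℝ → ℝ} {r θ φ : ℝ}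

lemma isCompact_sbox : IsCompact (SBox R1 R2 θ1 θ2 φ1 φ2) :=
  isCompact_Icc.prod (isCompact_Icc.prod isCompact_Icc)

lemma uniqueDiffOn_sbox (h1 : R1 < R2) (h2 : θ1 < θ2) (h3 : φ1 < φ2) :
    UniqueDiffOn ℝ (SBox R1 R2 θ1 θ2 φ1 φ2) :=
  (uniqueDiffOn_Icc h1).prod ((uniqueDiffOn_Icc h2).prod (uniqueDiffOn_Icc h3))

lemma interior_sbox : interior (SBox R1 R2 θ1 θ2 φ1 φ2)
    = Ioo R1 R2 ×ˢ Ioo θ1 θ2 ×ˢ Ioo φ1 φ2 := by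
  rw [SBox, interior_prod_eq, interior_prod_eq, interior_Icc, interior_Icc, interior_Icc]

lemma sbox_subset_closure_interior (h1 : R1 < R2) (h2 : θ1 < θ2) (h3 : φ1 < φ2) :
    SBox R1 R2 θ1 θ2 φ1 φ2 ⊆ closure (interior (SBox R1 R2 θ1 θ2 φ1 φ2)) := by
  rw [interior_sbox, closure_prod_eq, closure_prod_eq, closure_Ioo h1.ne, closure_Ioo h2.ne,
    closure_Ioo h3.ne]
  exact subset_rfl

lemma mem_sbox_iff {p : ℝ×ℝ×ℝ} : p ∈ SBox R1 R2 θ1 θ2 φ1 φ2 ↔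
    p.1 ∈ Icc R1 R2 ∧ p.2.1 ∈ Icc θ1 θ2 ∧ p.2.2 ∈ Icc φ1 φ2 := by
  rw [SBox, mem_prod, mem_prod]

lemma mem_interior_sbox_iff {p : ℝ×ℝ×ℝ} : p ∈ interior (SBox R1 R2 θ1 θ2 φ1 φ2) ↔
    p.1 ∈ Ioo R1 R2 ∧ p.2.1 ∈ Ioo θ1 θ2 ∧ p.2.2 ∈ Ioo φ1 φ2 := by
  rw [interior_sbox, mem_prod, mem_prod]
end Box

def pdB (B : Set (ℝ×ℝ×ℝ)) (e : ℝ×ℝ×ℝ) (F : ℝ×ℝ×ℝ → ℝ) (p : ℝ×ℝ×ℝ) : ℝ :=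
  fderivWithin ℝ F B p e

variable {B : Set (ℝ×ℝ×ℝ)} {F' : ℝ×ℝ×ℝ → ℝ} {e a b : ℝ×ℝ×ℝ} {p : ℝ×ℝ×ℝ}

lemma pdB_contDiffOn (hB : UniqueDiffOn ℝ B) (hF : ContDiffOn ℝ ∞ F' B) :
    ContDiffOn ℝ ∞ (pdB B e F') B :=
  (hF.fderivWithin hB (le_of_eq rfl)).clm_apply contDiffOn_const

lemma pdB_continuousOn (hB : UniqueDiffOn ℝ B) (hF : ContDiffOn ℝ ∞ F' B) :
    ContinuousOn (pdB B e F') B :=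
  (pdB_contDiffOn hB hF).continuousOn

lemma pdB_eq_fderiv (hp : B ∈ 𝓝 p) : pdB B e F' p = fderiv ℝ F' p e := by
  rw [pdB, fderivWithin_of_mem_nhds hp]

lemma pdB_swap (hF : ContDiffOn ℝ ∞ F' B) (hp : p ∈ interior B) :
    pdB B a (pdB B b F') p = pdB B b (pdB B a F') p := by
  have hmem : B ∈ 𝓝 p := mem_interior_iff_mem_nhds.1 hp
  have hFa : ContDiffAt ℝ ∞ F' p := hF.contDiffAt hmem
  have hdf : DifferentiableAt ℝ (fderiv ℝ F') p :=
    (hFa.fderiv_right wadd1).differentiableAt wle1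
  have key : ∀ c : ℝ×ℝ×ℝ, pdB B c F' =ᶠ[𝓝 p] fun q => fderiv ℝ F' q c := by
    intro c
    filter_upwards [isOpen_interior.mem_nhds hp] with q hq
    exact pdB_eq_fderiv (mem_interior_iff_mem_nhds.1 hq)
  have main : ∀ c d : ℝ×ℝ×ℝ, pdB B c (pdB B d F') p = fderiv ℝ (fderiv ℝ F') p c d := by
    intro c d
    rw [pdB_eq_fderiv hmem, (key d).fderiv_eq,
      fderiv_clm_apply hdf (differentiableAt_const d)]
    simp
  rw [main a b, main b a, (hFa.isSymmSndFDerivAt wle2).eq a b]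

section Lines
variable {R1 R2 θ1 θ2 φ1 φ2 : ℝ} {F : ℝ×ℝ×ℝ → ℝ} {r θ φ : ℝ}

local notation "BB" => SBox R1 R2 θ1 θ2 φ1 φ2

lemma line1 (hF : DifferentiableWithinAt ℝ F BB (r,θ,φ))
    (hθ : θ ∈ Icc θ1 θ2) (hφ : φ ∈ Icc φ1 φ2) :
    HasDerivWithinAt (fun s => F (s,θ,φ)) (pdB BB (1,0,0) F (r,θ,φ)) (Icc R1 R2) r := by
  have hline : HasDerivAt (fun s : ℝ => ((s,θ,φ) : ℝ×ℝ×ℝ)) ((1:ℝ),(0:ℝ),(0:ℝ)) r :=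
    HasDerivAt.prodMk (hasDerivAt_id r) (hasDerivAt_const r (θ,φ))
  have hmaps : MapsTo (fun s : ℝ => ((s,θ,φ) : ℝ×ℝ×ℝ)) (Icc R1 R2) BB := by
    intro s hs; exact mem_sbox_iff.2 ⟨hs, hθ, hφ⟩
  exact hF.hasFDerivWithinAt.comp_hasDerivWithinAt r hline.hasDerivWithinAt hmaps

lemma line2 (hF : DifferentiableWithinAt ℝ F BB (r,θ,φ))
    (hr : r ∈ Icc R1 R2) (hφ : φ ∈ Icc φ1 φ2) :
    HasDerivWithinAt (fun s => F (r,s,φ)) (pdB BB (0,1,0) F (r,θ,φ)) (Icc θ1 θ2) θ := by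
  have hline : HasDerivAt (fun s : ℝ => ((r,s,φ) : ℝ×ℝ×ℝ)) ((0:ℝ),(1:ℝ),(0:ℝ)) θ :=
    HasDerivAt.prodMk (hasDerivAt_const θ r) (HasDerivAt.prodMk (hasDerivAt_id θ) (hasDerivAt_const θ φ))
  have hmaps : MapsTo (fun s : ℝ => ((r,s,φ) : ℝ×ℝ×ℝ)) (Icc θ1 θ2) BB := by
    intro s hs; exact mem_sbox_iff.2 ⟨hr, hs, hφ⟩
  exact hF.hasFDerivWithinAt.comp_hasDerivWithinAt θ hline.hasDerivWithinAt hmaps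

lemma line3 (hF : DifferentiableWithinAt ℝ F BB (r,θ,φ))
    (hr : r ∈ Icc R1 R2) (hθ : θ ∈ Icc θ1 θ2) :
    HasDerivWithinAt (fun s => F (r,θ,s)) (pdB BB (0,0,1) F (r,θ,φ)) (Icc φ1 φ2) φ := by
  have hline : HasDerivAt (fun s : ℝ => ((r,θ,s) : ℝ×ℝ×ℝ)) ((0:ℝ),(0:ℝ),(1:ℝ)) φ :=
    HasDerivAt.prodMk (hasDerivAt_const φ r) (HasDerivAt.prodMk (hasDerivAt_const φ θ) (hasDerivAt_id φ))
  have hmaps : MapsTo (fun s : ℝ => ((r,θ,s) : ℝ×ℝ×ℝ)) (Icc φ1 φ2) BB := by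
    intro s hs; exact mem_sbox_iff.2 ⟨hr, hθ, hs⟩
  exact hF.hasFDerivWithinAt.comp_hasDerivWithinAt φ hline.hasDerivWithinAt hmaps

lemma pdB1_zero (hRR : R1 < R2) (hF : DifferentiableWithinAt ℝ F BB (r,θ,φ))
    (hr : r ∈ Icc R1 R2) (hθ : θ ∈ Icc θ1 θ2) (hφ : φ ∈ Icc φ1 φ2)
    (hz : ∀ s ∈ Icc R1 R2, F (s,θ,φ) = 0) :
    pdB BB (1,0,0) F (r,θ,φ) = 0 := by
  have h0 : HasDerivWithinAt (fun _ : ℝ => (0:ℝ)) (pdB BB (1,0,0) F (r,θ,φ)) (Icc R1 R2) r :=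
    (line1 hF hθ hφ).congr (fun s hs => (hz s hs).symm) (hz r hr).symm
  rw [← h0.derivWithin (uniqueDiffOn_Icc hRR r hr)]
  exact (hasDerivWithinAt_const r (Icc R1 R2) (0:ℝ)).derivWithin (uniqueDiffOn_Icc hRR r hr)

lemma pdB2_zero (hθθ : θ1 < θ2) (hF : DifferentiableWithinAt ℝ F BB (r,θ,φ))
    (hr : r ∈ Icc R1 R2) (hθ : θ ∈ Icc θ1 θ2) (hφ : φ ∈ Icc φ1 φ2)
    (hz : ∀ s ∈ Icc θ1 θ2, F (r,s,φ) = 0) :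
    pdB BB (0,1,0) F (r,θ,φ) = 0 := by
  have h0 : HasDerivWithinAt (fun _ : ℝ => (0:ℝ)) (pdB BB (0,1,0) F (r,θ,φ)) (Icc θ1 θ2) θ :=
    (line2 hF hr hφ).congr (fun s hs => (hz s hs).symm) (hz θ hθ).symm
  rw [← h0.derivWithin (uniqueDiffOn_Icc hθθ θ hθ)]
  exact (hasDerivWithinAt_const θ (Icc θ1 θ2) (0:ℝ)).derivWithin (uniqueDiffOn_Icc hθθ θ hθ)

lemma deriv1_eq (hF : ContDiffOn ℝ ∞ F BB) (hp : (r,θ,φ) ∈ interior BB) :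
    deriv (fun s => F (s,θ,φ)) r = pdB BB (1,0,0) F (r,θ,φ) := by
  have hmem : BB ∈ 𝓝 ((r,θ,φ) : ℝ×ℝ×ℝ) := mem_interior_iff_mem_nhds.1 hp
  have hd : DifferentiableAt ℝ F (r,θ,φ) :=
    (hF.contDiffAt hmem).differentiableAt wle1
  have hline : HasDerivAt (fun s : ℝ => ((s,θ,φ) : ℝ×ℝ×ℝ)) ((1:ℝ),(0:ℝ),(0:ℝ)) r :=
    HasDerivAt.prodMk (hasDerivAt_id r) (hasDerivAt_const r (θ,φ))
  rw [pdB_eq_fderiv hmem]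
  exact (hd.hasFDerivAt.comp_hasDerivAt r hline).deriv

lemma deriv2_eq (hF : ContDiffOn ℝ ∞ F BB) (hp : (r,θ,φ) ∈ interior BB) :
    deriv (fun s => F (r,s,φ)) θ = pdB BB (0,1,0) F (r,θ,φ) := by
  have hmem : BB ∈ 𝓝 ((r,θ,φ) : ℝ×ℝ×ℝ) := mem_interior_iff_mem_nhds.1 hp
  have hd : DifferentiableAt ℝ F (r,θ,φ) :=
    (hF.contDiffAt hmem).differentiableAt wle1
  have hline : HasDerivAt (fun s : ℝ => ((r,s,φ) : ℝ×ℝ×ℝ)) ((0:ℝ),(1:ℝ),(0:ℝ)) θ :=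
    HasDerivAt.prodMk (hasDerivAt_const θ r) (HasDerivAt.prodMk (hasDerivAt_id θ) (hasDerivAt_const θ φ))
  rw [pdB_eq_fderiv hmem]
  exact (hd.hasFDerivAt.comp_hasDerivAt θ hline).deriv

lemma deriv3_eq (hF : ContDiffOn ℝ ∞ F BB) (hp : (r,θ,φ) ∈ interior BB) :
    deriv (fun s => F (r,θ,s)) φ = pdB BB (0,0,1) F (r,θ,φ) := by
  have hmem : BB ∈ 𝓝 ((r,θ,φ) : ℝ×ℝ×ℝ) := mem_interior_iff_mem_nhds.1 hp
  have hd : DifferentiableAt ℝ F (r,θ,φ) :=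
    (hF.contDiffAt hmem).differentiableAt wle1
  have hline : HasDerivAt (fun s : ℝ => ((r,θ,s) : ℝ×ℝ×ℝ)) ((0:ℝ),(0:ℝ),(1:ℝ)) φ :=
    HasDerivAt.prodMk (hasDerivAt_const φ r) (HasDerivAt.prodMk (hasDerivAt_const φ θ) (hasDerivAt_id φ))
  rw [pdB_eq_fderiv hmem]
  exact (hd.hasFDerivAt.comp_hasDerivAt φ hline).deriv

end Lines

lemma ibp1 {a b : ℝ} (hab : a < b) {f g f' g' : ℝ → ℝ}
    (hfc : ContinuousOn f (Icc a b)) (hgc : ContinuousOn g (Icc a b))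
    (hf'c : ContinuousOn f' (Icc a b)) (hg'c : ContinuousOn g' (Icc a b))
    (hf : ∀ x ∈ Ioo a b, HasDerivAt f (f' x) x)
    (hg : ∀ x ∈ Ioo a b, HasDerivAt g (g' x) x)
    (hva : f a * g a = 0) (hvb : f b * g b = 0) :
    ∫ x in Icc a b, f' x * g x = - ∫ x in Icc a b, f x * g' x := by
  have huIcc : uIcc a b = Icc a b := uIcc_of_le hab.le
  have hint1 : IntervalIntegrable (fun x => f' x * g x) volume a b := by
    apply ContinuousOn.intervalIntegrable; rw [huIcc]; exact hf'c.mul hgc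
  have hint2 : IntervalIntegrable (fun x => f x * g' x) volume a b := by
    apply ContinuousOn.intervalIntegrable; rw [huIcc]; exact hfc.mul hg'c
  have key : ∫ x in a..b, (f' x * g x + f x * g' x) = f b * g b - f a * g a := by
    apply intervalIntegral.integral_eq_sub_of_hasDeriv_right_of_le hab.le (hfc.mul hgc)
      (fun x hx => ((hf x hx).mul (hg x hx)).hasDerivWithinAt) (hint1.add hint2)
  rw [intervalIntegral.integral_add hint1 hint2] at key
  have e1 : ∫ x in a..b, f' x * g x = ∫ x in Icc a b, f' x * g x := by
    rw [intervalIntegral.integral_of_le hab.le, ← integral_Icc_eq_integral_Ioc]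
  have e2 : ∫ x in a..b, f x * g' x = ∫ x in Icc a b, f x * g' x := by
    rw [intervalIntegral.integral_of_le hab.le, ← integral_Icc_eq_integral_Ioc]
  rw [e1, e2] at key
  rw [hva, hvb] at key
  linarith

lemma eqOn_closure_interior {X : Type*} [TopologicalSpace X] {s : Set X}
    {f g : X → ℝ} (hs : s ⊆ closure (interior s))
    (hf : ContinuousOn f s) (hg : ContinuousOn g s)
    (h : ∀ x ∈ interior s, f x = g x) : ∀ x ∈ s, f x = g x := by
  intro x hx
  have hne : (𝓝[interior s] x).NeBot := mem_closure_iff_nhdsWithin_neBot.1 (hs hx)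
  have hf' : Filter.Tendsto f (𝓝[interior s] x) (𝓝 (f x)) :=
    (hf x hx).mono_left (nhdsWithin_mono x interior_subset)
  have hg' : Filter.Tendsto g (𝓝[interior s] x) (𝓝 (g x)) :=
    (hg x hx).mono_left (nhdsWithin_mono x interior_subset)
  have h2 : Filter.Tendsto f (𝓝[interior s] x) (𝓝 (g x)) :=
    hg'.congr' (by filter_upwards [self_mem_nhdsWithin] with y hy using (h y hy).symm)
  exact tendsto_nhds_unique hf' h2

lemma setIntegral_prod_eq {α β : Type*} [MeasureSpace α] [MeasureSpace β]
    [SigmaFinite (volume : Measure α)] [SigmaFinite (volume : Measure β)]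
    (f : α × β → ℝ) {s : Set α} {t : Set β}
    (hf : IntegrableOn f (s ×ˢ t)) :
    ∫ z in s ×ˢ t, f z = ∫ x in s, ∫ y in t, f (x, y) := by
  rw [show (volume : Measure (α × β)) = Measure.prod volume volume from
    Measure.volume_eq_prod α β] at hf ⊢
  exact setIntegral_prod f hf

lemma setIntegral_swap' {α β : Type*} [MeasureSpace α] [MeasureSpace β]
    [SigmaFinite (volume : Measure α)] [SigmaFinite (volume : Measure β)]
    (f : α × β → ℝ) {s : Set α} {t : Set β} (hf : IntegrableOn f (s ×ˢ t)) :
    ∫ x in s, ∫ y in t, f (x, y) = ∫ y in t, ∫ x in s, f (x, y) := by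
  have h : Integrable (Function.uncurry fun x y => f (x, y))
      ((volume.restrict s).prod (volume.restrict t)) := by
    rw [Measure.prod_restrict]
    rw [show (volume : Measure (α × β)) = Measure.prod volume volume from
      Measure.volume_eq_prod α β] at hf
    exact hf
  exact integral_integral_swap h

lemma integrable_partial {α β : Type*} [MeasureSpace α] [MeasureSpace β]
    [SigmaFinite (volume : Measure α)] [SigmaFinite (volume : Measure β)]
    (f : α × β → ℝ) {s : Set α} {t : Set β} (hf : IntegrableOn f (s ×ˢ t)) :
    IntegrableOn (fun y => ∫ x in s, f (x, y)) t := by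
  have h : Integrable f ((volume.restrict s).prod (volume.restrict t)) := by
    rw [Measure.prod_restrict]
    rw [show (volume : Measure (α × β)) = Measure.prod volume volume from
      Measure.volume_eq_prod α β] at hf
    exact hf
  exact h.integral_prod_right

lemma integral_Icc_congr_Ioo {a b : ℝ} {f g : ℝ → ℝ} (h : ∀ x ∈ Ioo a b, f x = g x) :
    ∫ x in Icc a b, f x = ∫ x in Icc a b, g x := by
  rw [integral_Icc_eq_integral_Ioo, integral_Icc_eq_integral_Ioo]
  exact setIntegral_congr_fun measurableSet_Ioo h


section Aux2
variable {R1 R2 θ1 θ2 φ1 φ2 : ℝ} {F G : ℝ×ℝ×ℝ → ℝ} {r θ φ : ℝ} {e : ℝ×ℝ×ℝ}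

local notation "BB" => SBox R1 R2 θ1 θ2 φ1 φ2

lemma contOn_line1 (hG : ContinuousOn G BB) (hθ : θ ∈ Icc θ1 θ2) (hφ : φ ∈ Icc φ1 φ2) :
    ContinuousOn (fun s => G (s,θ,φ)) (Icc R1 R2) :=
  hG.comp ((continuous_id.prodMk continuous_const).continuousOn)
    (fun s hs => mem_sbox_iff.2 ⟨hs,hθ,hφ⟩)

lemma contOn_line2 (hG : ContinuousOn G BB) (hr : r ∈ Icc R1 R2) (hφ : φ ∈ Icc φ1 φ2) :
    ContinuousOn (fun s => G (r,s,φ)) (Icc θ1 θ2) :=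
  hG.comp ((continuous_const.prodMk (continuous_id.prodMk continuous_const)).continuousOn)
    (fun s hs => mem_sbox_iff.2 ⟨hr,hs,hφ⟩)

lemma contOn_line3 (hG : ContinuousOn G BB) (hr : r ∈ Icc R1 R2) (hθ : θ ∈ Icc θ1 θ2) :
    ContinuousOn (fun s => G (r,θ,s)) (Icc φ1 φ2) :=
  hG.comp ((continuous_const.prodMk (continuous_const.prodMk continuous_id)).continuousOn)
    (fun s hs => mem_sbox_iff.2 ⟨hr,hθ,hs⟩)

lemma pdB_congr_interior {B : Set (ℝ×ℝ×ℝ)} {p : ℝ×ℝ×ℝ} {G G' : ℝ×ℝ×ℝ → ℝ}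
    (h : ∀ q ∈ interior B, G q = G' q) (hp : p ∈ interior B) :
    pdB B e G p = pdB B e G' p := by
  have hev : G =ᶠ[𝓝 p] G' := by
    filter_upwards [isOpen_interior.mem_nhds hp] with q hq using h q hq
  rw [pdB, pdB, Filter.EventuallyEq.fderivWithin_eq (hev.filter_mono nhdsWithin_le_nhds)
    (h p hp)]

lemma sect_integrableOn (hg : ContinuousOn G BB) (hr : r ∈ Icc R1 R2) :
    IntegrableOn (fun q : ℝ×ℝ => G (r, q)) (Icc θ1 θ2 ×ˢ Icc φ1 φ2) := by
  have hc : ContinuousOn (fun q : ℝ×ℝ => G (r, q)) (Icc θ1 θ2 ×ˢ Icc φ1 φ2) :=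
    hg.comp ((continuous_const.prodMk continuous_id).continuousOn)
      (fun q hq => mem_sbox_iff.2 ⟨hr, (mem_prod.1 hq).1, (mem_prod.1 hq).2⟩)
  exact hc.integrableOn_compact (isCompact_Icc.prod isCompact_Icc)

lemma T1 (hg : ContinuousOn G BB) :
    ∫ p in BB, G p
      = ∫ r in Icc R1 R2, ∫ θ in Icc θ1 θ2, ∫ φ in Icc φ1 φ2, G (r,θ,φ) := by
  have hI : IntegrableOn G BB := hg.integrableOn_compact isCompact_sbox
  rw [show (BB : Set (ℝ×ℝ×ℝ)) = Icc R1 R2 ×ˢ (Icc θ1 θ2 ×ˢ Icc φ1 φ2) from rfl,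
    setIntegral_prod_eq G hI]
  refine setIntegral_congr_fun measurableSet_Icc (fun r hr => ?_)
  exact setIntegral_prod_eq _ (sect_integrableOn hg hr)

lemma T3 (hg : ContinuousOn G BB) :
    ∫ p in BB, G p
      = ∫ r in Icc R1 R2, ∫ φ in Icc φ1 φ2, ∫ θ in Icc θ1 θ2, G (r,θ,φ) := by
  have hI : IntegrableOn G BB := hg.integrableOn_compact isCompact_sbox
  rw [show (BB : Set (ℝ×ℝ×ℝ)) = Icc R1 R2 ×ˢ (Icc θ1 θ2 ×ˢ Icc φ1 φ2) from rfl,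
    setIntegral_prod_eq G hI]
  refine setIntegral_congr_fun measurableSet_Icc (fun r hr => ?_)
  rw [setIntegral_prod_eq _ (sect_integrableOn hg hr)]
  exact setIntegral_swap' _ (sect_integrableOn hg hr)

lemma T2 (hg : ContinuousOn G BB) :
    ∫ p in BB, G p
      = ∫ θ in Icc θ1 θ2, ∫ φ in Icc φ1 φ2, ∫ r in Icc R1 R2, G (r,θ,φ) := by
  have hI : IntegrableOn G BB := hg.integrableOn_compact isCompact_sbox
  rw [show (BB : Set (ℝ×ℝ×ℝ)) = Icc R1 R2 ×ˢ (Icc θ1 θ2 ×ˢ Icc φ1 φ2) from rfl,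
    setIntegral_prod_eq G hI, setIntegral_swap' G hI,
    setIntegral_prod_eq (fun q : ℝ×ℝ => ∫ r in Icc R1 R2, G (r, q))
      (integrable_partial G hI)]

end Aux2


section Steps
variable {R1 R2 θ1 θ2 φ1 φ2 : ℝ} {F G : ℝ×ℝ×ℝ → ℝ}

local notation "BB" => SBox R1 R2 θ1 θ2 φ1 φ2

lemma step_r (hRR : R1 < R2) (hθθ : θ1 < θ2) (hφφ : φ1 < φ2)
    (hF : ContDiffOn ℝ ∞ F BB) (hG : ContDiffOn ℝ ∞ G BB)
    (hGz : ∀ p ∈ BB, (p.1 = R1 ∨ p.1 = R2) → G p = 0) :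
    ∫ p in BB, pdB BB ((1:ℝ),(0:ℝ),(0:ℝ)) F p * G p
      = - ∫ p in BB, F p * pdB BB ((1:ℝ),(0:ℝ),(0:ℝ)) G p := by
  have hUD := uniqueDiffOn_sbox hRR hθθ hφφ
  have hFc := hF.continuousOn
  have hGc := hG.continuousOn
  have hF'c : ContinuousOn (pdB BB ((1:ℝ),(0:ℝ),(0:ℝ)) F) BB := pdB_continuousOn hUD hF
  have hG'c : ContinuousOn (pdB BB ((1:ℝ),(0:ℝ),(0:ℝ)) G) BB := pdB_continuousOn hUD hG
  have hc1 : ContinuousOn (fun p => pdB BB ((1:ℝ),(0:ℝ),(0:ℝ)) F p * G p) BB := hF'c.mul hGc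
  have hc2 : ContinuousOn (fun p => F p * pdB BB ((1:ℝ),(0:ℝ),(0:ℝ)) G p) BB := hFc.mul hG'c
  have key : ∀ θ ∈ Icc θ1 θ2, ∀ φ ∈ Icc φ1 φ2,
      (∫ r in Icc R1 R2, pdB BB ((1:ℝ),(0:ℝ),(0:ℝ)) F (r,θ,φ) * G (r,θ,φ))
        = - ∫ r in Icc R1 R2, F (r,θ,φ) * pdB BB ((1:ℝ),(0:ℝ),(0:ℝ)) G (r,θ,φ) := by
    intro θ hθ φ hφ
    refine ibp1 hRR (contOn_line1 hFc hθ hφ) (contOn_line1 hGc hθ hφ)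
      (contOn_line1 hF'c hθ hφ) (contOn_line1 hG'c hθ hφ) ?_ ?_ ?_ ?_
    · intro x hx
      exact (line1 (hF.differentiableOn wle1 _
        (mem_sbox_iff.2 ⟨⟨hx.1.le, hx.2.le⟩, hθ, hφ⟩)) hθ hφ).hasDerivAt
        (Icc_mem_nhds hx.1 hx.2)
    · intro x hx
      exact (line1 (hG.differentiableOn wle1 _
        (mem_sbox_iff.2 ⟨⟨hx.1.le, hx.2.le⟩, hθ, hφ⟩)) hθ hφ).hasDerivAt
        (Icc_mem_nhds hx.1 hx.2)
    · rw [hGz (R1,θ,φ) (mem_sbox_iff.2 ⟨⟨le_refl _, hRR.le⟩, hθ, hφ⟩) (Or.inl rfl), mul_zero]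
    · rw [hGz (R2,θ,φ) (mem_sbox_iff.2 ⟨⟨hRR.le, le_refl _⟩, hθ, hφ⟩) (Or.inr rfl), mul_zero]
  rw [T2 hc1, T2 hc2]
  rw [show (∫ θ in Icc θ1 θ2, ∫ φ in Icc φ1 φ2, ∫ r in Icc R1 R2,
        pdB BB ((1:ℝ),(0:ℝ),(0:ℝ)) F (r,θ,φ) * G (r,θ,φ))
      = ∫ θ in Icc θ1 θ2, ∫ φ in Icc φ1 φ2,
          - ∫ r in Icc R1 R2, F (r,θ,φ) * pdB BB ((1:ℝ),(0:ℝ),(0:ℝ)) G (r,θ,φ) from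
    setIntegral_congr_fun measurableSet_Icc (fun θ hθ =>
      setIntegral_congr_fun measurableSet_Icc (fun φ hφ => key θ hθ φ hφ))]
  simp only [integral_neg]

lemma step_t (hRR : R1 < R2) (hθθ : θ1 < θ2) (hφφ : φ1 < φ2)
    (hF : ContDiffOn ℝ ∞ F BB) (hG : ContDiffOn ℝ ∞ G BB)
    (hGz : ∀ p ∈ BB, (p.2.1 = θ1 ∨ p.2.1 = θ2) → G p = 0) :
    ∫ p in BB, pdB BB ((0:ℝ),(1:ℝ),(0:ℝ)) F p * G p
      = - ∫ p in BB, F p * pdB BB ((0:ℝ),(1:ℝ),(0:ℝ)) G p := by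
  have hUD := uniqueDiffOn_sbox hRR hθθ hφφ
  have hFc := hF.continuousOn
  have hGc := hG.continuousOn
  have hF'c : ContinuousOn (pdB BB ((0:ℝ),(1:ℝ),(0:ℝ)) F) BB := pdB_continuousOn hUD hF
  have hG'c : ContinuousOn (pdB BB ((0:ℝ),(1:ℝ),(0:ℝ)) G) BB := pdB_continuousOn hUD hG
  have hc1 : ContinuousOn (fun p => pdB BB ((0:ℝ),(1:ℝ),(0:ℝ)) F p * G p) BB := hF'c.mul hGc
  have hc2 : ContinuousOn (fun p => F p * pdB BB ((0:ℝ),(1:ℝ),(0:ℝ)) G p) BB := hFc.mul hG'c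
  have key : ∀ r ∈ Icc R1 R2, ∀ φ ∈ Icc φ1 φ2,
      (∫ θ in Icc θ1 θ2, pdB BB ((0:ℝ),(1:ℝ),(0:ℝ)) F (r,θ,φ) * G (r,θ,φ))
        = - ∫ θ in Icc θ1 θ2, F (r,θ,φ) * pdB BB ((0:ℝ),(1:ℝ),(0:ℝ)) G (r,θ,φ) := by
    intro r hr φ hφ
    refine ibp1 hθθ (contOn_line2 hFc hr hφ) (contOn_line2 hGc hr hφ)
      (contOn_line2 hF'c hr hφ) (contOn_line2 hG'c hr hφ) ?_ ?_ ?_ ?_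
    · intro x hx
      exact (line2 (hF.differentiableOn wle1 _
        (mem_sbox_iff.2 ⟨hr, ⟨hx.1.le, hx.2.le⟩, hφ⟩)) hr hφ).hasDerivAt
        (Icc_mem_nhds hx.1 hx.2)
    · intro x hx
      exact (line2 (hG.differentiableOn wle1 _
        (mem_sbox_iff.2 ⟨hr, ⟨hx.1.le, hx.2.le⟩, hφ⟩)) hr hφ).hasDerivAt
        (Icc_mem_nhds hx.1 hx.2)
    · rw [hGz (r,θ1,φ) (mem_sbox_iff.2 ⟨hr, ⟨le_refl _, hθθ.le⟩, hφ⟩) (Or.inl rfl), mul_zero]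
    · rw [hGz (r,θ2,φ) (mem_sbox_iff.2 ⟨hr, ⟨hθθ.le, le_refl _⟩, hφ⟩) (Or.inr rfl), mul_zero]
  rw [T3 hc1, T3 hc2]
  rw [show (∫ r in Icc R1 R2, ∫ φ in Icc φ1 φ2, ∫ θ in Icc θ1 θ2,
        pdB BB ((0:ℝ),(1:ℝ),(0:ℝ)) F (r,θ,φ) * G (r,θ,φ))
      = ∫ r in Icc R1 R2, ∫ φ in Icc φ1 φ2,
          - ∫ θ in Icc θ1 θ2, F (r,θ,φ) * pdB BB ((0:ℝ),(1:ℝ),(0:ℝ)) G (r,θ,φ) from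
    setIntegral_congr_fun measurableSet_Icc (fun r hr =>
      setIntegral_congr_fun measurableSet_Icc (fun φ hφ => key r hr φ hφ))]
  simp only [integral_neg]

lemma step_p (hRR : R1 < R2) (hθθ : θ1 < θ2) (hφφ : φ1 < φ2)
    (hF : ContDiffOn ℝ ∞ F BB) (hG : ContDiffOn ℝ ∞ G BB)
    (hGz : ∀ p ∈ BB, (p.2.2 = φ1 ∨ p.2.2 = φ2) → G p = 0) :
    ∫ p in BB, pdB BB ((0:ℝ),(0:ℝ),(1:ℝ)) F p * G p
      = - ∫ p in BB, F p * pdB BB ((0:ℝ),(0:ℝ),(1:ℝ)) G p := by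
  have hUD := uniqueDiffOn_sbox hRR hθθ hφφ
  have hFc := hF.continuousOn
  have hGc := hG.continuousOn
  have hF'c : ContinuousOn (pdB BB ((0:ℝ),(0:ℝ),(1:ℝ)) F) BB := pdB_continuousOn hUD hF
  have hG'c : ContinuousOn (pdB BB ((0:ℝ),(0:ℝ),(1:ℝ)) G) BB := pdB_continuousOn hUD hG
  have hc1 : ContinuousOn (fun p => pdB BB ((0:ℝ),(0:ℝ),(1:ℝ)) F p * G p) BB := hF'c.mul hGc
  have hc2 : ContinuousOn (fun p => F p * pdB BB ((0:ℝ),(0:ℝ),(1:ℝ)) G p) BB := hFc.mul hG'c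
  have key : ∀ r ∈ Icc R1 R2, ∀ θ ∈ Icc θ1 θ2,
      (∫ φ in Icc φ1 φ2, pdB BB ((0:ℝ),(0:ℝ),(1:ℝ)) F (r,θ,φ) * G (r,θ,φ))
        = - ∫ φ in Icc φ1 φ2, F (r,θ,φ) * pdB BB ((0:ℝ),(0:ℝ),(1:ℝ)) G (r,θ,φ) := by
    intro r hr θ hθ
    refine ibp1 hφφ (contOn_line3 hFc hr hθ) (contOn_line3 hGc hr hθ)
      (contOn_line3 hF'c hr hθ) (contOn_line3 hG'c hr hθ) ?_ ?_ ?_ ?_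
    · intro x hx
      exact (line3 (hF.differentiableOn wle1 _
        (mem_sbox_iff.2 ⟨hr, hθ, ⟨hx.1.le, hx.2.le⟩⟩)) hr hθ).hasDerivAt
        (Icc_mem_nhds hx.1 hx.2)
    · intro x hx
      exact (line3 (hG.differentiableOn wle1 _
        (mem_sbox_iff.2 ⟨hr, hθ, ⟨hx.1.le, hx.2.le⟩⟩)) hr hθ).hasDerivAt
        (Icc_mem_nhds hx.1 hx.2)
    · rw [hGz (r,θ,φ1) (mem_sbox_iff.2 ⟨hr, hθ, ⟨le_refl _, hφφ.le⟩⟩) (Or.inl rfl), mul_zero]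
    · rw [hGz (r,θ,φ2) (mem_sbox_iff.2 ⟨hr, hθ, ⟨hφφ.le, le_refl _⟩⟩) (Or.inr rfl), mul_zero]
  rw [T1 hc1, T1 hc2]
  rw [show (∫ r in Icc R1 R2, ∫ θ in Icc θ1 θ2, ∫ φ in Icc φ1 φ2,
        pdB BB ((0:ℝ),(0:ℝ),(1:ℝ)) F (r,θ,φ) * G (r,θ,φ))
      = ∫ r in Icc R1 R2, ∫ θ in Icc θ1 θ2,
          - ∫ φ in Icc φ1 φ2, F (r,θ,φ) * pdB BB ((0:ℝ),(0:ℝ),(1:ℝ)) G (r,θ,φ) from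
    setIntegral_congr_fun measurableSet_Icc (fun r hr =>
      setIntegral_congr_fun measurableSet_Icc (fun θ hθ => key r hr θ hθ))]
  simp only [integral_neg]

end Steps


/-! Function layer -/

def VV (v : ℝ → ℝ → ℝ → ℝ) : ℝ×ℝ×ℝ → ℝ := fun p => v p.1 p.2.1 p.2.2

section FunLayer
variable {R1 R2 θ1 θ2 φ1 φ2 : ℝ} {v : ℝ → ℝ → ℝ → ℝ} {V : ℝ×ℝ×ℝ → ℝ}

local notation "BB" => SBox R1 R2 θ1 θ2 φ1 φ2
local notation "ee1" => ((1:ℝ),(0:ℝ),(0:ℝ))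
local notation "ee2" => ((0:ℝ),(1:ℝ),(0:ℝ))
local notation "ee3" => ((0:ℝ),(0:ℝ),(1:ℝ))

variable (hRR : R1 < R2) (hθθ : θ1 < θ2) (hφφ : φ1 < φ2)
  (hV : ContDiffOn ℝ ∞ V (SBox R1 R2 θ1 θ2 φ1 φ2))

def W1 (B : Set (ℝ×ℝ×ℝ)) (V : ℝ×ℝ×ℝ → ℝ) : ℝ×ℝ×ℝ → ℝ := pdB B ((0:ℝ),(0:ℝ),(1:ℝ)) V
def W2 (B : Set (ℝ×ℝ×ℝ)) (V : ℝ×ℝ×ℝ → ℝ) : ℝ×ℝ×ℝ → ℝ := pdB B ((0:ℝ),(0:ℝ),(1:ℝ)) (W1 B V)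
def GG3 (B : Set (ℝ×ℝ×ℝ)) (V : ℝ×ℝ×ℝ → ℝ) : ℝ×ℝ×ℝ → ℝ :=
  fun p => Real.sin p.2.1 * pdB B ((0:ℝ),(1:ℝ),(0:ℝ)) (W2 B V) p
def GG4 (B : Set (ℝ×ℝ×ℝ)) (V : ℝ×ℝ×ℝ → ℝ) : ℝ×ℝ×ℝ → ℝ := pdB B ((0:ℝ),(1:ℝ),(0:ℝ)) (GG3 B V)
def GG5 (B : Set (ℝ×ℝ×ℝ)) (V : ℝ×ℝ×ℝ → ℝ) : ℝ×ℝ×ℝ → ℝ :=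
  fun p => p.1^2 * pdB B ((1:ℝ),(0:ℝ),(0:ℝ)) (GG4 B V) p
def GG6 (B : Set (ℝ×ℝ×ℝ)) (V : ℝ×ℝ×ℝ → ℝ) : ℝ×ℝ×ℝ → ℝ := pdB B ((1:ℝ),(0:ℝ),(0:ℝ)) (GG5 B V)
def HH (B : Set (ℝ×ℝ×ℝ)) (V : ℝ×ℝ×ℝ → ℝ) : ℝ×ℝ×ℝ → ℝ := pdB B ((1:ℝ),(0:ℝ),(0:ℝ)) (GG3 B V)
def Vr (B : Set (ℝ×ℝ×ℝ)) (V : ℝ×ℝ×ℝ → ℝ) : ℝ×ℝ×ℝ → ℝ := pdB B ((1:ℝ),(0:ℝ),(0:ℝ)) V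
def Vrt (B : Set (ℝ×ℝ×ℝ)) (V : ℝ×ℝ×ℝ → ℝ) : ℝ×ℝ×ℝ → ℝ := pdB B ((0:ℝ),(1:ℝ),(0:ℝ)) (Vr B V)
def KK (B : Set (ℝ×ℝ×ℝ)) (V : ℝ×ℝ×ℝ → ℝ) : ℝ×ℝ×ℝ → ℝ := pdB B ((0:ℝ),(0:ℝ),(1:ℝ)) (Vrt B V)

lemma smooth_sin1 {B : Set (ℝ×ℝ×ℝ)} : ContDiffOn ℝ ∞ (fun p : ℝ×ℝ×ℝ => Real.sin p.2.1) B :=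
  ((Real.contDiff_sin.of_le le_top).comp (contDiff_fst.comp contDiff_snd)).contDiffOn

lemma smooth_r2 {B : Set (ℝ×ℝ×ℝ)} : ContDiffOn ℝ ∞ (fun p : ℝ×ℝ×ℝ => p.1^2) B :=
  (contDiff_fst.pow 2).contDiffOn

include hRR hθθ hφφ hV

lemma smooth_W1 : ContDiffOn ℝ ∞ (W1 BB V) BB :=
  pdB_contDiffOn (uniqueDiffOn_sbox hRR hθθ hφφ) hV

lemma smooth_W2 : ContDiffOn ℝ ∞ (W2 BB V) BB :=
  pdB_contDiffOn (uniqueDiffOn_sbox hRR hθθ hφφ) (smooth_W1 hRR hθθ hφφ hV)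

lemma smooth_GG3 : ContDiffOn ℝ ∞ (GG3 BB V) BB :=
  smooth_sin1.mul (pdB_contDiffOn (uniqueDiffOn_sbox hRR hθθ hφφ) (smooth_W2 hRR hθθ hφφ hV))

lemma smooth_GG4 : ContDiffOn ℝ ∞ (GG4 BB V) BB :=
  pdB_contDiffOn (uniqueDiffOn_sbox hRR hθθ hφφ) (smooth_GG3 hRR hθθ hφφ hV)

lemma smooth_GG5 : ContDiffOn ℝ ∞ (GG5 BB V) BB :=
  smooth_r2.mul (pdB_contDiffOn (uniqueDiffOn_sbox hRR hθθ hφφ) (smooth_GG4 hRR hθθ hφφ hV))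

lemma smooth_GG6 : ContDiffOn ℝ ∞ (GG6 BB V) BB :=
  pdB_contDiffOn (uniqueDiffOn_sbox hRR hθθ hφφ) (smooth_GG5 hRR hθθ hφφ hV)

lemma smooth_HH : ContDiffOn ℝ ∞ (HH BB V) BB :=
  pdB_contDiffOn (uniqueDiffOn_sbox hRR hθθ hφφ) (smooth_GG3 hRR hθθ hφφ hV)

lemma smooth_Vr : ContDiffOn ℝ ∞ (Vr BB V) BB :=
  pdB_contDiffOn (uniqueDiffOn_sbox hRR hθθ hφφ) hV

lemma smooth_Vrt : ContDiffOn ℝ ∞ (Vrt BB V) BB :=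
  pdB_contDiffOn (uniqueDiffOn_sbox hRR hθθ hφφ) (smooth_Vr hRR hθθ hφφ hV)

lemma smooth_KK : ContDiffOn ℝ ∞ (KK BB V) BB :=
  pdB_contDiffOn (uniqueDiffOn_sbox hRR hθθ hφφ) (smooth_Vrt hRR hθθ hφφ hV)

/-! Vanishing lemmas -/

lemma vanish_Vr_tp (hbd : ∀ p ∈ BB, p ∉ interior BB → V p = 0) :
    ∀ p ∈ BB, (p.2.1 = θ1 ∨ p.2.1 = θ2 ∨ p.2.2 = φ1 ∨ p.2.2 = φ2) → Vr BB V p = 0 := by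
  intro p hp hface
  have hm := mem_sbox_iff.1 hp
  refine pdB1_zero hRR (hV.differentiableOn wle1 _ hp) hm.1 hm.2.1 hm.2.2 ?_
  intro s hs
  refine hbd (s, p.2.1, p.2.2) (mem_sbox_iff.2 ⟨hs, hm.2.1, hm.2.2⟩) ?_
  intro hin
  have hi := mem_interior_sbox_iff.1 hin
  rcases hface with h | h | h | h
  · exact absurd h (ne_of_gt hi.2.1.1)
  · exact absurd h (ne_of_lt hi.2.1.2)
  · exact absurd h (ne_of_gt hi.2.2.1)
  · exact absurd h (ne_of_lt hi.2.2.2)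

lemma vanish_Vrt_p (hbd : ∀ p ∈ BB, p ∉ interior BB → V p = 0) :
    ∀ p ∈ BB, (p.2.2 = φ1 ∨ p.2.2 = φ2) → Vrt BB V p = 0 := by
  intro p hp hface
  have hm := mem_sbox_iff.1 hp
  refine pdB2_zero hθθ ((smooth_Vr hRR hθθ hφφ hV).differentiableOn wle1 _ hp)
    hm.1 hm.2.1 hm.2.2 ?_
  intro s hs
  refine vanish_Vr_tp hRR hθθ hφφ hV hbd (p.1, s, p.2.2)
    (mem_sbox_iff.2 ⟨hm.1, hs, hm.2.2⟩) ?_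
  rcases hface with h | h
  · exact Or.inr (Or.inr (Or.inl h))
  · exact Or.inr (Or.inr (Or.inr h))

end FunLayer


section PointLayer
variable {R1 R2 θ1 θ2 φ1 φ2 : ℝ} {v : ℝ → ℝ → ℝ → ℝ} {V : ℝ×ℝ×ℝ → ℝ} {q : ℝ×ℝ×ℝ}

local notation "BB" => SBox R1 R2 θ1 θ2 φ1 φ2
local notation "ee1" => ((1:ℝ),(0:ℝ),(0:ℝ))
local notation "ee2" => ((0:ℝ),(1:ℝ),(0:ℝ))
local notation "ee3" => ((0:ℝ),(0:ℝ),(1:ℝ))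

lemma ev1 (hq : q ∈ interior BB) :
    ∀ᶠ s in 𝓝 q.1, ((s, q.2.1, q.2.2) : ℝ×ℝ×ℝ) ∈ interior BB := by
  have hc : Continuous fun s : ℝ => ((s, q.2.1, q.2.2) : ℝ×ℝ×ℝ) :=
    continuous_id.prodMk (continuous_const.prodMk continuous_const)
  exact hc.continuousAt.preimage_mem_nhds (isOpen_interior.mem_nhds hq)

lemma ev2 (hq : q ∈ interior BB) :
    ∀ᶠ s in 𝓝 q.2.1, ((q.1, s, q.2.2) : ℝ×ℝ×ℝ) ∈ interior BB := by
  have hc : Continuous fun s : ℝ => ((q.1, s, q.2.2) : ℝ×ℝ×ℝ) :=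
    continuous_const.prodMk (continuous_id.prodMk continuous_const)
  exact hc.continuousAt.preimage_mem_nhds (isOpen_interior.mem_nhds hq)

lemma ev3 (hq : q ∈ interior BB) :
    ∀ᶠ s in 𝓝 q.2.2, ((q.1, q.2.1, s) : ℝ×ℝ×ℝ) ∈ interior BB := by
  have hc : Continuous fun s : ℝ => ((q.1, q.2.1, s) : ℝ×ℝ×ℝ) :=
    continuous_const.prodMk (continuous_const.prodMk continuous_id)
  exact hc.continuousAt.preimage_mem_nhds (isOpen_interior.mem_nhds hq)

variable (hRR : R1 < R2) (hθθ : θ1 < θ2) (hφφ : φ1 < φ2)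
  (hV : ContDiffOn ℝ ∞ V (SBox R1 R2 θ1 θ2 φ1 φ2))

include hRR hθθ hφφ hV

/-- Interior identity `∂r ∂θ G3 = ∂θ ∂r G3` (Sa). -/
lemma Sa : ∀ p ∈ BB, pdB BB ee1 (GG4 BB V) p = pdB BB ee2 (HH BB V) p := by
  have hUD := uniqueDiffOn_sbox hRR hθθ hφφ
  refine eqOn_closure_interior (sbox_subset_closure_interior hRR hθθ hφφ)
    (pdB_continuousOn hUD (smooth_GG4 hRR hθθ hφφ hV))
    (pdB_continuousOn hUD (smooth_HH hRR hθθ hφφ hV)) ?_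
  intro p hp
  exact pdB_swap (smooth_GG3 hRR hθθ hφφ hV) hp

/-- Interior identity chain (Sb): `H = sin θ · ∂φ K` on the box. -/
lemma Sb : ∀ p ∈ BB, HH BB V p = Real.sin p.2.1 * pdB BB ee3 (KK BB V) p := by
  have hUD := uniqueDiffOn_sbox hRR hθθ hφφ
  have hW1 := smooth_W1 hRR hθθ hφφ hV
  have hW2 := smooth_W2 hRR hθθ hφφ hV
  have hVr := smooth_Vr hRR hθθ hφφ hV
  have hKK := smooth_KK hRR hθθ hφφ hV
  have hGG3 := smooth_GG3 hRR hθθ hφφ hV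
  have hX : ContDiffOn ℝ ∞ (pdB BB ee2 (W2 BB V)) BB := pdB_contDiffOn hUD hW2
  refine eqOn_closure_interior (sbox_subset_closure_interior hRR hθθ hφφ)
    (pdB_continuousOn hUD hGG3)
    (smooth_sin1.continuousOn.mul (pdB_continuousOn hUD hKK)) ?_
  intro p hp
  have step1 : HH BB V p = Real.sin p.2.1 * pdB BB ee1 (pdB BB ee2 (W2 BB V)) p := by
    have h1 : HH BB V p = deriv (fun s => GG3 BB V (s, p.2.1, p.2.2)) p.1 :=
      (deriv1_eq hGG3 hp).symm
    have h2 : (fun s => GG3 BB V (s, p.2.1, p.2.2))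
        = fun s => Real.sin p.2.1 * pdB BB ee2 (W2 BB V) (s, p.2.1, p.2.2) := rfl
    rw [h1, h2, deriv_const_mul_field, deriv1_eq hX hp]
  have a1 : ∀ q' ∈ interior BB, pdB BB ee1 (W1 BB V) q' = pdB BB ee3 (Vr BB V) q' :=
    fun q' hq' => pdB_swap hV hq'
  have a2 : ∀ q' ∈ interior BB,
      pdB BB ee1 (W2 BB V) q' = pdB BB ee3 (pdB BB ee3 (Vr BB V)) q' := by
    intro q' hq'
    rw [show pdB BB ee1 (W2 BB V) q' = pdB BB ee3 (pdB BB ee1 (W1 BB V)) q' from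
      pdB_swap hW1 hq']
    exact pdB_congr_interior a1 hq'
  have a4 : ∀ q' ∈ interior BB,
      pdB BB ee2 (pdB BB ee3 (Vr BB V)) q' = pdB BB ee3 (Vrt BB V) q' :=
    fun q' hq' => pdB_swap hVr hq'
  have step2 : pdB BB ee1 (pdB BB ee2 (W2 BB V)) p = pdB BB ee3 (KK BB V) p := by
    rw [show pdB BB ee1 (pdB BB ee2 (W2 BB V)) p = pdB BB ee2 (pdB BB ee1 (W2 BB V)) p from
      pdB_swap hW2 hp]
    rw [pdB_congr_interior a2 hp]
    have hVr3 : ContDiffOn ℝ ∞ (pdB BB ee3 (Vr BB V)) BB := pdB_contDiffOn hUD hVr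
    rw [show pdB BB ee2 (pdB BB ee3 (pdB BB ee3 (Vr BB V))) p
        = pdB BB ee3 (pdB BB ee2 (pdB BB ee3 (Vr BB V))) p from
      pdB_swap hVr3 hp]
    exact pdB_congr_interior a4 hp
  rw [step1, step2]

/-- Coefficient lemma: `∂θ (r² · Vr) = r² · Vrt` on the box. -/
lemma Ca : ∀ p ∈ BB, pdB BB ee2 (fun q => q.1^2 * Vr BB V q) p = p.1^2 * Vrt BB V p := by
  have hUD := uniqueDiffOn_sbox hRR hθθ hφφ
  have hVr := smooth_Vr hRR hθθ hφφ hV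
  have hP : ContDiffOn ℝ ∞ (fun q : ℝ×ℝ×ℝ => q.1^2 * Vr BB V q) BB := smooth_r2.mul hVr
  refine eqOn_closure_interior (sbox_subset_closure_interior hRR hθθ hφφ)
    (pdB_continuousOn hUD hP)
    (smooth_r2.continuousOn.mul (pdB_continuousOn hUD hVr)) ?_
  intro p hp
  have h1 : pdB BB ee2 (fun q : ℝ×ℝ×ℝ => q.1^2 * Vr BB V q) p
      = deriv (fun s => p.1^2 * Vr BB V (p.1, s, p.2.2)) p.2.1 :=
    (deriv2_eq hP hp).symm
  rw [h1, deriv_const_mul_field, deriv2_eq hVr hp]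
  rfl

/-- Coefficient lemma: `∂φ ((r² sin θ) · Vrt) = (r² sin θ) · K` on the box. -/
lemma Cb : ∀ p ∈ BB, pdB BB ee3 (fun q => (q.1^2 * Real.sin q.2.1) * Vrt BB V q) p
    = (p.1^2 * Real.sin p.2.1) * KK BB V p := by
  have hUD := uniqueDiffOn_sbox hRR hθθ hφφ
  have hVrt := smooth_Vrt hRR hθθ hφφ hV
  have hP : ContDiffOn ℝ ∞ (fun q : ℝ×ℝ×ℝ => (q.1^2 * Real.sin q.2.1) * Vrt BB V q) BB :=
    (smooth_r2.mul smooth_sin1).mul hVrt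
  refine eqOn_closure_interior (sbox_subset_closure_interior hRR hθθ hφφ)
    (pdB_continuousOn hUD hP)
    ((smooth_r2.mul smooth_sin1).continuousOn.mul (pdB_continuousOn hUD (smooth_Vrt hRR hθθ hφφ hV))) ?_
  intro p hp
  have h1 : pdB BB ee3 (fun q : ℝ×ℝ×ℝ => (q.1^2 * Real.sin q.2.1) * Vrt BB V q) p
      = deriv (fun s => (p.1^2 * Real.sin p.2.1) * Vrt BB V (p.1, p.2.1, s)) p.2.2 :=
    (deriv3_eq hP hp).symm
  rw [h1, deriv_const_mul_field, deriv3_eq hVrt hp]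
  rfl


/-- Interior representation of the triple mixed derivative. -/
lemma repr_RHS {v : ℝ → ℝ → ℝ → ℝ} (hV : ContDiffOn ℝ ∞ (VV v) (SBox R1 R2 θ1 θ2 φ1 φ2)) :
    ∀ q ∈ interior BB, pr (pt (pp v)) q.1 q.2.1 q.2.2 = KK BB (VV v) q := by
  have hUD := uniqueDiffOn_sbox hRR hθθ hφφ
  have hW1 := smooth_W1 hRR hθθ hφφ hV
  have hVr := smooth_Vr hRR hθθ hφφ hV
  have hpp : ∀ q' ∈ interior BB, pp v q'.1 q'.2.1 q'.2.2 = W1 BB (VV v) q' :=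
    fun q' hq' => deriv3_eq hV hq'
  have hpt : ∀ q' ∈ interior BB,
      pt (pp v) q'.1 q'.2.1 q'.2.2 = pdB BB ee2 (W1 BB (VV v)) q' := by
    intro q' hq'
    have hev : (fun s => pp v q'.1 s q'.2.2) =ᶠ[𝓝 q'.2.1]
        (fun s => W1 BB (VV v) (q'.1, s, q'.2.2)) := by
      filter_upwards [ev2 hq'] with s hs using hpp _ hs
    show deriv (fun s => pp v q'.1 s q'.2.2) q'.2.1 = _
    rw [hev.deriv_eq]
    exact deriv2_eq hW1 hq'
  intro q hq
  have hpr : pr (pt (pp v)) q.1 q.2.1 q.2.2 = pdB BB ee1 (pdB BB ee2 (W1 BB (VV v))) q := by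
    have hev : (fun s => pt (pp v) s q.2.1 q.2.2) =ᶠ[𝓝 q.1]
        (fun s => pdB BB ee2 (W1 BB (VV v)) (s, q.2.1, q.2.2)) := by
      filter_upwards [ev1 hq] with s hs using hpt _ hs
    show deriv (fun s => pt (pp v) s q.2.1 q.2.2) q.1 = _
    rw [hev.deriv_eq]
    exact deriv1_eq (pdB_contDiffOn hUD hW1) hq
  rw [hpr]
  rw [show pdB BB ee1 (pdB BB ee2 (W1 BB (VV v))) q
      = pdB BB ee2 (pdB BB ee1 (W1 BB (VV v))) q from pdB_swap hW1 hq]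
  have a1 : ∀ q' ∈ interior BB,
      pdB BB ee1 (W1 BB (VV v)) q' = pdB BB ee3 (Vr BB (VV v)) q' :=
    fun q' hq' => pdB_swap hV hq'
  rw [pdB_congr_interior a1 hq]
  exact pdB_swap hVr hq

/-- Interior representation of the LHS integrand. -/
lemma repr_LHS {v : ℝ → ℝ → ℝ → ℝ} (hR1 : 0 < R1) (hθ1 : 0 < θ1) (hθ2 : θ2 < Real.pi)
    (hV : ContDiffOn ℝ ∞ (VV v) (SBox R1 R2 θ1 θ2 φ1 φ2)) :
    ∀ q ∈ interior BB,
      Drr (Dhtt R1 (Dhpp R1 θ1 v)) q.1 q.2.1 q.2.2 * v q.1 q.2.1 q.2.2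
        * (q.1^2 * Real.sin q.2.1)
      = (1/(R1^4 * Real.sin θ1^2)) * (GG6 BB (VV v) q * VV v q) := by
  have hUD := uniqueDiffOn_sbox hRR hθθ hφφ
  have hW1 := smooth_W1 hRR hθθ hφφ hV
  have hW2 := smooth_W2 hRR hθθ hφφ hV
  have hGG3 := smooth_GG3 hRR hθθ hφφ hV
  have hGG4 := smooth_GG4 hRR hθθ hφφ hV
  have hGG5 := smooth_GG5 hRR hθθ hφφ hV
  set c3 : ℝ := 1/(R1^2 * Real.sin θ1^2) with hc3
  have hpp : ∀ q' ∈ interior BB, pp v q'.1 q'.2.1 q'.2.2 = W1 BB (VV v) q' :=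
    fun q' hq' => deriv3_eq hV hq'
  have hpp2 : ∀ q' ∈ interior BB, pp (pp v) q'.1 q'.2.1 q'.2.2 = W2 BB (VV v) q' := by
    intro q' hq'
    have hev : (fun s => pp v q'.1 q'.2.1 s) =ᶠ[𝓝 q'.2.2]
        (fun s => W1 BB (VV v) (q'.1, q'.2.1, s)) := by
      filter_upwards [ev3 hq'] with s hs using hpp _ hs
    show deriv (fun s => pp v q'.1 q'.2.1 s) q'.2.2 = _
    rw [hev.deriv_eq]
    exact deriv3_eq hW1 hq'
  have hDhpp : ∀ q' ∈ interior BB,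
      Dhpp R1 θ1 v q'.1 q'.2.1 q'.2.2 = c3 * W2 BB (VV v) q' := by
    intro q' hq'
    show (1/(R1^2 * Real.sin θ1^2)) * pp (pp v) q'.1 q'.2.1 q'.2.2 = _
    rw [hpp2 _ hq', hc3]
  have hpt1 : ∀ q' ∈ interior BB,
      pt (Dhpp R1 θ1 v) q'.1 q'.2.1 q'.2.2 = c3 * pdB BB ee2 (W2 BB (VV v)) q' := by
    intro q' hq'
    have hev : (fun s => Dhpp R1 θ1 v q'.1 s q'.2.2) =ᶠ[𝓝 q'.2.1]
        (fun s => c3 * W2 BB (VV v) (q'.1, s, q'.2.2)) := by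
      filter_upwards [ev2 hq'] with s hs using hDhpp _ hs
    show deriv (fun s => Dhpp R1 θ1 v q'.1 s q'.2.2) q'.2.1 = _
    rw [hev.deriv_eq, deriv_const_mul_field, deriv2_eq hW2 hq']
  have hptX : ∀ q' ∈ interior BB,
      pt (fun r' θ' φ' => Real.sin θ' * pt (Dhpp R1 θ1 v) r' θ' φ') q'.1 q'.2.1 q'.2.2
        = c3 * GG4 BB (VV v) q' := by
    intro q' hq'
    have hev : (fun s => Real.sin s * pt (Dhpp R1 θ1 v) q'.1 s q'.2.2) =ᶠ[𝓝 q'.2.1]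
        (fun s => c3 * GG3 BB (VV v) (q'.1, s, q'.2.2)) := by
      filter_upwards [ev2 hq'] with s hs
      rw [hpt1 _ hs]
      show Real.sin s * (c3 * pdB BB ee2 (W2 BB (VV v)) (q'.1, s, q'.2.2))
        = c3 * (Real.sin s * pdB BB ee2 (W2 BB (VV v)) (q'.1, s, q'.2.2))
      ring
    show deriv (fun s => Real.sin s * pt (Dhpp R1 θ1 v) q'.1 s q'.2.2) q'.2.1 = _
    rw [hev.deriv_eq, deriv_const_mul_field, deriv2_eq hGG3 hq']
    rfl
  have hDhtt : ∀ q' ∈ interior BB,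
      Dhtt R1 (Dhpp R1 θ1 v) q'.1 q'.2.1 q'.2.2
        = (1/(R1^2 * Real.sin q'.2.1)) * (c3 * GG4 BB (VV v) q') := by
    intro q' hq'
    show (1/(R1^2 * Real.sin q'.2.1))
        * pt (fun r' θ' φ' => Real.sin θ' * pt (Dhpp R1 θ1 v) r' θ' φ') q'.1 q'.2.1 q'.2.2 = _
    rw [hptX _ hq']
  intro q hq
  have hprA : ∀ q' ∈ interior BB, q'.2.1 = q.2.1 →
      pr (Dhtt R1 (Dhpp R1 θ1 v)) q'.1 q'.2.1 q'.2.2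
        = ((1/(R1^2 * Real.sin q.2.1)) * c3) * pdB BB ee1 (GG4 BB (VV v)) q' := by
    intro q' hq' hco
    have hev : (fun s => Dhtt R1 (Dhpp R1 θ1 v) s q'.2.1 q'.2.2) =ᶠ[𝓝 q'.1]
        (fun s => ((1/(R1^2 * Real.sin q.2.1)) * c3) * GG4 BB (VV v) (s, q'.2.1, q'.2.2)) := by
      filter_upwards [ev1 hq'] with s hs
      rw [hDhtt _ hs, hco]
      ring
    show deriv (fun s => Dhtt R1 (Dhpp R1 θ1 v) s q'.2.1 q'.2.2) q'.1 = _
    rw [hev.deriv_eq, deriv_const_mul_field, deriv1_eq hGG4 hq']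
  have hpr2 : pr (fun r' θ' φ' => r'^2 * pr (Dhtt R1 (Dhpp R1 θ1 v)) r' θ' φ') q.1 q.2.1 q.2.2
      = ((1/(R1^2 * Real.sin q.2.1)) * c3) * GG6 BB (VV v) q := by
    have hev : (fun s => s^2 * pr (Dhtt R1 (Dhpp R1 θ1 v)) s q.2.1 q.2.2) =ᶠ[𝓝 q.1]
        (fun s => ((1/(R1^2 * Real.sin q.2.1)) * c3) * GG5 BB (VV v) (s, q.2.1, q.2.2)) := by
      filter_upwards [ev1 hq] with s hs
      rw [hprA _ hs rfl]
      show s^2 * (((1/(R1^2 * Real.sin q.2.1)) * c3)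
          * pdB BB ee1 (GG4 BB (VV v)) (s, q.2.1, q.2.2))
        = ((1/(R1^2 * Real.sin q.2.1)) * c3)
          * (s^2 * pdB BB ee1 (GG4 BB (VV v)) (s, q.2.1, q.2.2))
      ring
    show deriv (fun s => s^2 * pr (Dhtt R1 (Dhpp R1 θ1 v)) s q.2.1 q.2.2) q.1 = _
    rw [hev.deriv_eq, deriv_const_mul_field, deriv1_eq hGG5 hq]
    rfl
  have hDrr : Drr (Dhtt R1 (Dhpp R1 θ1 v)) q.1 q.2.1 q.2.2
      = (1/q.1^2) * (((1/(R1^2 * Real.sin q.2.1)) * c3) * GG6 BB (VV v) q) := by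
    show (1/q.1^2)
        * pr (fun r' θ' φ' => r'^2 * pr (Dhtt R1 (Dhpp R1 θ1 v)) r' θ' φ') q.1 q.2.1 q.2.2 = _
    rw [hpr2]
  rw [hDrr]
  have hi := mem_interior_sbox_iff.1 hq
  have hrpos : (0:ℝ) < q.1 := lt_of_lt_of_le hR1 hi.1.1.le
  have hsin : (0:ℝ) < Real.sin q.2.1 :=
    Real.sin_pos_of_pos_of_lt_pi (lt_trans hθ1 hi.2.1.1) (lt_trans hi.2.1.2 hθ2)
  have hsin1 : (0:ℝ) < Real.sin θ1 :=
    Real.sin_pos_of_pos_of_lt_pi hθ1 (lt_trans hθθ hθ2)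
  have hvq : v q.1 q.2.1 q.2.2 = VV v q := rfl
  rw [hvq, hc3]
  field_simp

end PointLayer

end TripleAux


open scoped ContDiff in
open TripleAux in
theorem triple_product_term_dissipative
    (R1 R2 θ1 θ2 φ1 φ2 : ℝ)
    (hR1 : 0 < R1) (hRR : R1 < R2)
    (hθ1 : 0 < θ1) (hθθ : θ1 < θ2) (hθ2 : θ2 < Real.pi)
    (hφ : φ1 < φ2)
    (v : ℝ → ℝ → ℝ → ℝ)
    (hv : SmoothOnBox R1 R2 θ1 θ2 φ1 φ2 v)
    (hv0 : VanishOnBdry R1 R2 θ1 θ2 φ1 φ2 v) :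
    -ipw R1 R2 θ1 θ2 φ1 φ2 (Drr (Dhtt R1 (Dhpp R1 θ1 v))) v
    = wnorm R1 R2 θ1 θ2 φ1 φ2 (fun r θ => r ^ 2 * Real.sin θ / (R1 ^ 4 * Real.sin θ1 ^ 2)) (pr (pt (pp v))) := by
  have hV : ContDiffOn ℝ ∞ (VV v) (SBox R1 R2 θ1 θ2 φ1 φ2) := hv.of_le (by simp)
  have hUD := TripleAux.uniqueDiffOn_sbox hRR hθθ hφ
  have hclosed : IsClosed (SBox R1 R2 θ1 θ2 φ1 φ2) :=
    isClosed_Icc.prod (isClosed_Icc.prod isClosed_Icc)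
  have hmeas : MeasurableSet (SBox R1 R2 θ1 θ2 φ1 φ2) := hclosed.measurableSet
  have hbd : ∀ p ∈ SBox R1 R2 θ1 θ2 φ1 φ2,
      p ∉ interior (SBox R1 R2 θ1 θ2 φ1 φ2) → VV v p = 0 := by
    intro p hp hni
    exact hv0 p (by rw [hclosed.frontier_eq]; exact ⟨hp, hni⟩)
  have hVz : ∀ p ∈ SBox R1 R2 θ1 θ2 φ1 φ2, (p.1 = R1 ∨ p.1 = R2) → VV v p = 0 := by
    intro p hp h
    refine hbd p hp ?_
    intro hin
    have hi := TripleAux.mem_interior_sbox_iff.1 hin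
    rcases h with h | h
    · exact absurd h (ne_of_gt hi.1.1)
    · exact absurd h (ne_of_lt hi.1.2)
  have hVrz := TripleAux.vanish_Vr_tp hRR hθθ hφ hV hbd
  have hVrtz := TripleAux.vanish_Vrt_p hRR hθθ hφ hV hbd
  have hVr := TripleAux.smooth_Vr hRR hθθ hφ hV
  have hVrt := TripleAux.smooth_Vrt hRR hθθ hφ hV
  have hKK := TripleAux.smooth_KK hRR hθθ hφ hV
  have hHH := TripleAux.smooth_HH hRR hθθ hφ hV
  have hG5 := TripleAux.smooth_GG5 hRR hθθ hφ hV
  have hG6 := TripleAux.smooth_GG6 hRR hθθ hφ hV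
  set SB := SBox R1 R2 θ1 θ2 φ1 φ2 with hSB
  set c : ℝ := 1/(R1^4 * Real.sin θ1^2) with hc
  have step1 : (∫ p in SB, TripleAux.GG6 SB (VV v) p * VV v p)
      = - ∫ p in SB, TripleAux.GG5 SB (VV v) p * TripleAux.Vr SB (VV v) p :=
    TripleAux.step_r hRR hθθ hφ hG5 hV hVz
  have congr1 : (∫ p in SB, TripleAux.GG5 SB (VV v) p * TripleAux.Vr SB (VV v) p)
      = ∫ p in SB, pdB SB ((0:ℝ),(1:ℝ),(0:ℝ)) (TripleAux.HH SB (VV v)) p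
          * (p.1^2 * TripleAux.Vr SB (VV v) p) := by
    refine setIntegral_congr_fun hmeas (fun p hp => ?_)
    have hSa := TripleAux.Sa hRR hθθ hφ hV p hp
    show p.1^2 * pdB SB ((1:ℝ),(0:ℝ),(0:ℝ)) (TripleAux.GG4 SB (VV v)) p
        * TripleAux.Vr SB (VV v) p = _
    rw [hSa]
    ring
  have step2 : (∫ p in SB, pdB SB ((0:ℝ),(1:ℝ),(0:ℝ)) (TripleAux.HH SB (VV v)) p
        * (p.1^2 * TripleAux.Vr SB (VV v) p))
      = - ∫ p in SB, TripleAux.HH SB (VV v) p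
          * pdB SB ((0:ℝ),(1:ℝ),(0:ℝ)) (fun q => q.1^2 * TripleAux.Vr SB (VV v) q) p := by
    refine TripleAux.step_t hRR hθθ hφ hHH (TripleAux.smooth_r2.mul hVr) ?_
    intro p hp h
    have h0 := hVrz p hp (by rcases h with h | h; exacts [Or.inl h, Or.inr (Or.inl h)])
    simp [h0]
  have congr2 : (∫ p in SB, TripleAux.HH SB (VV v) p
        * pdB SB ((0:ℝ),(1:ℝ),(0:ℝ)) (fun q => q.1^2 * TripleAux.Vr SB (VV v) q) p)
      = ∫ p in SB, TripleAux.HH SB (VV v) p * (p.1^2 * TripleAux.Vrt SB (VV v) p) := by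
    refine setIntegral_congr_fun hmeas (fun p hp => ?_)
    rw [TripleAux.Ca hRR hθθ hφ hV p hp]
  have congr3 : (∫ p in SB, TripleAux.HH SB (VV v) p * (p.1^2 * TripleAux.Vrt SB (VV v) p))
      = ∫ p in SB, pdB SB ((0:ℝ),(0:ℝ),(1:ℝ)) (TripleAux.KK SB (VV v)) p
          * ((p.1^2 * Real.sin p.2.1) * TripleAux.Vrt SB (VV v) p) := by
    refine setIntegral_congr_fun hmeas (fun p hp => ?_)
    rw [TripleAux.Sb hRR hθθ hφ hV p hp]
    ring
  have step3 : (∫ p in SB, pdB SB ((0:ℝ),(0:ℝ),(1:ℝ)) (TripleAux.KK SB (VV v)) p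
        * ((p.1^2 * Real.sin p.2.1) * TripleAux.Vrt SB (VV v) p))
      = - ∫ p in SB, TripleAux.KK SB (VV v) p
          * pdB SB ((0:ℝ),(0:ℝ),(1:ℝ))
            (fun q => (q.1^2 * Real.sin q.2.1) * TripleAux.Vrt SB (VV v) q) p := by
    refine TripleAux.step_p hRR hθθ hφ hKK
      ((TripleAux.smooth_r2.mul TripleAux.smooth_sin1).mul hVrt) ?_
    intro p hp h
    have h0 := hVrtz p hp h
    simp [h0]
  have congr4 : (∫ p in SB, TripleAux.KK SB (VV v) p
        * pdB SB ((0:ℝ),(0:ℝ),(1:ℝ))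
          (fun q => (q.1^2 * Real.sin q.2.1) * TripleAux.Vrt SB (VV v) q) p)
      = ∫ p in SB, (p.1^2 * Real.sin p.2.1) * (TripleAux.KK SB (VV v) p)^2 := by
    refine setIntegral_congr_fun hmeas (fun p hp => ?_)
    rw [TripleAux.Cb hRR hθθ hφ hV p hp]
    ring
  have chain : (∫ p in SB, TripleAux.GG6 SB (VV v) p * VV v p)
      = - ∫ p in SB, (p.1^2 * Real.sin p.2.1) * (TripleAux.KK SB (VV v) p)^2 := by
    rw [step1, congr1, step2, congr2, congr3, step3, congr4]
    ring
  have hGG6c : ContinuousOn (TripleAux.GG6 SB (VV v)) SB := hG6.continuousOn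
  have hKKc : ContinuousOn (TripleAux.KK SB (VV v)) SB := hKK.continuousOn
  have hLHSclean : ContinuousOn (fun p : ℝ×ℝ×ℝ => c * (TripleAux.GG6 SB (VV v) p * VV v p)) SB :=
    continuousOn_const.mul (hGG6c.mul hV.continuousOn)
  have hRHSclean : ContinuousOn
      (fun p : ℝ×ℝ×ℝ => c * ((p.1^2 * Real.sin p.2.1) * (TripleAux.KK SB (VV v) p)^2)) SB :=
    continuousOn_const.mul ((TripleAux.smooth_r2.continuousOn.mul
      TripleAux.smooth_sin1.continuousOn).mul (hKKc.pow 2))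
  have hLHSexp : ipw R1 R2 θ1 θ2 φ1 φ2 (Drr (Dhtt R1 (Dhpp R1 θ1 v))) v
      = ∫ p in SB, c * (TripleAux.GG6 SB (VV v) p * VV v p) := by
    rw [TripleAux.T1 hLHSclean]
    show (∫ r in Icc R1 R2, ∫ θ in Icc θ1 θ2, ∫ φ in Icc φ1 φ2,
        Drr (Dhtt R1 (Dhpp R1 θ1 v)) r θ φ * v r θ φ * (r^2 * Real.sin θ)) = _
    refine TripleAux.integral_Icc_congr_Ioo (fun r hr' => ?_)
    refine TripleAux.integral_Icc_congr_Ioo (fun θ hθ' => ?_)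
    refine TripleAux.integral_Icc_congr_Ioo (fun φ hφ' => ?_)
    exact TripleAux.repr_LHS hRR hθθ hφ hV hR1 hθ1 hθ2 hV (r,θ,φ)
      (TripleAux.mem_interior_sbox_iff.2 ⟨hr', hθ', hφ'⟩)
  have hRHSexp : wnorm R1 R2 θ1 θ2 φ1 φ2
        (fun r θ => r ^ 2 * Real.sin θ / (R1 ^ 4 * Real.sin θ1 ^ 2)) (pr (pt (pp v)))
      = ∫ p in SB, c * ((p.1^2 * Real.sin p.2.1) * (TripleAux.KK SB (VV v) p)^2) := by
    rw [TripleAux.T1 hRHSclean]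
    show (∫ r in Icc R1 R2, ∫ θ in Icc θ1 θ2, ∫ φ in Icc φ1 φ2,
        (r ^ 2 * Real.sin θ / (R1 ^ 4 * Real.sin θ1 ^ 2)) * (pr (pt (pp v)) r θ φ)^2) = _
    refine TripleAux.integral_Icc_congr_Ioo (fun r hr' => ?_)
    refine TripleAux.integral_Icc_congr_Ioo (fun θ hθ' => ?_)
    refine TripleAux.integral_Icc_congr_Ioo (fun φ hφ' => ?_)
    rw [TripleAux.repr_RHS hRR hθθ hφ hV hV (r,θ,φ)
      (TripleAux.mem_interior_sbox_iff.2 ⟨hr', hθ', hφ'⟩)]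
    rw [hc]
    ring
  rw [hLHSexp, hRHSexp, integral_const_mul, integral_const_mul, chain]
  ring
end
end
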